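/- arXiv:2604.02626 — 8 statements merged into one kernel-verified Lean document; each statement's English description precedes it below -/
import Mathlib

section
/- Let F : A → B be an additive functor between additive categories that is full, dense (essentially surjective), and objective (every morphism f in A with F(f) = 0 factors through an object annihilated by F). Then F induces an equivalence of categories A/[Ker F] ≃ B, where Ker F is the full subcategory of objects annihilated by F and [Ker F] is the ideal of morphisms factoring through Ker F. -/
open CategoryTheory

universe v₁ v₂ u₁ u₂

/-- The ideal of morphisms factoring through the essential kernel of `F`
(objects annihilated by `F`), as a hom-relation: `f ~ g` iff `f - g` factors
through an object `Z` with `F(Z) ≅ 0`. -/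
def kerRel {A : Type u₁} [Category.{v₁} A] [Preadditive A]
    {B : Type u₂} [Category.{v₂} B] (F : A ⥤ B) : HomRel A :=
  fun {X Y} f g =>
    ∃ (Z : A) (u : X ⟶ Z) (v : Z ⟶ Y), Limits.IsZero (F.obj Z) ∧ f = g + u ≫ v

/-- a full, dense (essentially surjective) and objective additive functor
`F : A ⥤ B` between additive categories induces an equivalence `A/[Ker F] ≃ B`. -/
theorem stmt_0 {A : Type u₁} [Category.{v₁} A] [Preadditive A]
    {B : Type u₂} [Category.{v₂} B] [Preadditive B]
    (F : A ⥤ B) [F.Additive] [F.Full] [F.EssSurj]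
    (hobjective : ∀ {X Y : A} (f : X ⟶ Y), F.map f = 0 →
      ∃ (Z : A) (u : X ⟶ Z) (v : Z ⟶ Y), Limits.IsZero (F.obj Z) ∧ f = u ≫ v) :
    ∃ G : CategoryTheory.Quotient (kerRel F) ⥤ B,
      Nonempty ((Quotient.functor (kerRel F) ⋙ G) ≅ F) ∧ G.IsEquivalence := by
  have hcomp : ∀ (X Y : A) (f g : X ⟶ Y), kerRel F f g → F.map f = F.map g := by
    rintro X Y f g ⟨Z, u, v, hZ, rfl⟩
    have hu : F.map u = 0 := hZ.eq_of_tgt (F.map u) 0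
    simp [F.map_add, F.map_comp, hu]
  let G := CategoryTheory.Quotient.lift (kerRel F) F hcomp
  have hfull : G.Full := by
    constructor
    intro X Y f
    obtain ⟨a, ha⟩ := F.map_surjective (X := X.as) (Y := Y.as) f
    exact ⟨(Quotient.functor (kerRel F)).map a, ha⟩
  have hfaithful : G.Faithful := by
    constructor
    intro X Y f g hfg
    obtain ⟨f', rfl⟩ := (Quotient.functor (kerRel F)).map_surjective f
    obtain ⟨g', rfl⟩ := (Quotient.functor (kerRel F)).map_surjective g
    have h : F.map f' = F.map g' := hfg
    have h0 : F.map (f' - g') = 0 := by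
      rw [F.map_sub, h, sub_self]
    obtain ⟨Z, u, v, hZ, hfac⟩ := hobjective _ h0
    exact CategoryTheory.Quotient.sound _ ⟨Z, u, v, hZ, by rw [← hfac]; abel⟩
  have hess : G.EssSurj := by
    constructor
    intro b
    obtain ⟨a, ⟨i⟩⟩ := Functor.EssSurj.mem_essImage (F := F) b
    exact ⟨(Quotient.functor (kerRel F)).obj a, ⟨i⟩⟩
  refine ⟨G, ⟨CategoryTheory.Quotient.lift.isLift _ F hcomp⟩, ?_⟩
  have := hfull
  have := hfaithful
  have := hess
  exact { }
end

section
/- Let A be an exact category and consider a commutative square of inflations with i : X → Y, j : X → X', i' : X' → Y', j' : Y → Y' satisfying i' ∘ j = j' ∘ i. Then the following are equivalent: (1) the induced morphism Coker(i) → Coker(i') is an inflation; (2) the canonical morphism from the pushout Y ⊔_X X' to Y' is an inflation; (3) the induced morphism Coker(j) → Coker(j') is an inflation. -/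
open CategoryTheory Limits

universe v u

/-- A (Quillen) exact structure on an additive category: a class of
kernel-cokernel pairs (conflations) closed under isomorphism, containing the
trivial conflations, with inflations and deflations closed under composition,
pushouts of inflations along arbitrary morphisms existing and being inflations,
and dually pullbacks of deflations along arbitrary morphisms. -/
structure ExactStructure (𝒜 : Type u) [Category.{v} 𝒜] [Preadditive 𝒜] where
  conflation : ∀ ⦃X Y Z : 𝒜⦄, (X ⟶ Y) → (Y ⟶ Z) → Prop
  comp_zero : ∀ {X Y Z : 𝒜} {i : X ⟶ Y} {p : Y ⟶ Z}, conflation i p → i ≫ p = 0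
  isKernel : ∀ {X Y Z : 𝒜} {i : X ⟶ Y} {p : Y ⟶ Z}, conflation i p →
    ∀ {W : 𝒜} (f : W ⟶ Y), f ≫ p = 0 → ∃! g : W ⟶ X, g ≫ i = f
  isCokernel : ∀ {X Y Z : 𝒜} {i : X ⟶ Y} {p : Y ⟶ Z}, conflation i p →
    ∀ {W : 𝒜} (f : Y ⟶ W), i ≫ f = 0 → ∃! g : Z ⟶ W, p ≫ g = f
  iso_closed : ∀ {X Y Z X' Y' Z' : 𝒜} {i : X ⟶ Y} {p : Y ⟶ Z}
    (eX : X' ≅ X) (eY : Y ≅ Y') (eZ : Z ≅ Z'), conflation i p →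
    conflation (eX.hom ≫ i ≫ eY.hom) (eY.inv ≫ p ≫ eZ.hom)
  conflation_zero_right : ∀ {Z : 𝒜} (X : 𝒜), IsZero Z → ∀ p : X ⟶ Z, conflation (𝟙 X) p
  conflation_zero_left : ∀ {Z : 𝒜} (X : 𝒜), IsZero Z → ∀ i : Z ⟶ X, conflation i (𝟙 X)
  infl_comp : ∀ {X Y W : 𝒜} (i : X ⟶ Y) (j : Y ⟶ W),
    (∃ (Z : 𝒜) (p : Y ⟶ Z), conflation i p) → (∃ (Z : 𝒜) (p : W ⟶ Z), conflation j p) →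
    ∃ (Z : 𝒜) (p : W ⟶ Z), conflation (i ≫ j) p
  defl_comp : ∀ {X Y W : 𝒜} (p : X ⟶ Y) (q : Y ⟶ W),
    (∃ (Z : 𝒜) (i : Z ⟶ X), conflation i p) → (∃ (Z : 𝒜) (i : Z ⟶ Y), conflation i q) →
    ∃ (Z : 𝒜) (i : Z ⟶ X), conflation i (p ≫ q)
  pushout_infl : ∀ {X Y X' : 𝒜} (i : X ⟶ Y) (f : X ⟶ X'),
    (∃ (Z : 𝒜) (p : Y ⟶ Z), conflation i p) →
    ∃ (W : 𝒜) (a : Y ⟶ W) (b : X' ⟶ W), IsPushout i f a b ∧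
      ∃ (Z : 𝒜) (p : W ⟶ Z), conflation b p
  pullback_defl : ∀ {X Y Y' : 𝒜} (p : Y ⟶ X) (f : Y' ⟶ X),
    (∃ (Z : 𝒜) (i : Z ⟶ Y), conflation i p) →
    ∃ (W : 𝒜) (a : W ⟶ Y) (b : W ⟶ Y'), IsPullback a b p f ∧
      ∃ (Z : 𝒜) (i : Z ⟶ W), conflation i b

namespace ExactStructure

variable {𝒜 : Type u} [Category.{v} 𝒜] [Preadditive 𝒜] (E : ExactStructure 𝒜)

/-- `i` is an inflation (admissible monomorphism). -/
def Inflation {X Y : 𝒜} (i : X ⟶ Y) : Prop := ∃ (Z : 𝒜) (p : Y ⟶ Z), E.conflation i p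

/-- `p` is a deflation (admissible epimorphism). -/
def Deflation {Y Z : 𝒜} (p : Y ⟶ Z) : Prop := ∃ (X : 𝒜) (i : X ⟶ Y), E.conflation i p

/-- `P` is projective with respect to the exact structure. -/
def Proj (P : 𝒜) : Prop :=
  ∀ ⦃Y Z : 𝒜⦄ (p : Y ⟶ Z), E.Deflation p → ∀ f : P ⟶ Z, ∃ g : P ⟶ Y, g ≫ p = f

/-- `I` is injective with respect to the exact structure. -/
def Inj (I : 𝒜) : Prop :=
  ∀ ⦃X Y : 𝒜⦄ (i : X ⟶ Y), E.Inflation i → ∀ f : X ⟶ I, ∃ g : Y ⟶ I, i ≫ g = f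

/-- A Frobenius exact category: enough projectives, enough injectives, and
projectives coincide with injectives. -/
structure IsFrobenius : Prop where
  enough_proj : ∀ X : 𝒜, ∃ (P : 𝒜) (p : P ⟶ X), E.Proj P ∧ E.Deflation p
  enough_inj : ∀ X : 𝒜, ∃ (I : 𝒜) (i : X ⟶ I), E.Inj I ∧ E.Inflation i
  proj_iff_inj : ∀ X : 𝒜, E.Proj X ↔ E.Inj X

end ExactStructure

set_option linter.dupNamespace false
set_option linter.unusedSectionVars false

namespace ExactStructure

variable {𝒜 : Type u} [Category.{v} 𝒜] [Preadditive 𝒜]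

/-- A "raw pushout": commutative square with the universal property, stated
elementarily. -/
structure RawPO {P Q S T : 𝒜} (m : P ⟶ Q) (f : P ⟶ S) (g : Q ⟶ T) (h : S ⟶ T) : Prop where
  w : m ≫ g = f ≫ h
  desc : ∀ {T' : 𝒜} (α : Q ⟶ T') (β : S ⟶ T'), m ≫ α = f ≫ β →
    ∃! γ : T ⟶ T', g ≫ γ = α ∧ h ≫ γ = β

lemma rawPO_of_isPushout {P Q S T : 𝒜} {m : P ⟶ Q} {f : P ⟶ S} {g : Q ⟶ T} {h : S ⟶ T}
    (H : IsPushout m f g h) : RawPO m f g h := by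
  refine ⟨H.w, fun α β hc => ⟨H.desc α β hc, ⟨H.inl_desc _ _ _, H.inr_desc _ _ _⟩, ?_⟩⟩
  rintro γ ⟨h1, h2⟩
  exact H.hom_ext (by rw [h1, H.inl_desc]) (by rw [h2, H.inr_desc])

lemma RawPO.ext {P Q S T : 𝒜} {m : P ⟶ Q} {f : P ⟶ S} {g : Q ⟶ T} {h : S ⟶ T}
    (H : RawPO m f g h) {T' : 𝒜} {x y : T ⟶ T'}
    (h1 : g ≫ x = g ≫ y) (h2 : h ≫ x = h ≫ y) : x = y :=
  (H.desc (g ≫ x) (h ≫ x) (by rw [← Category.assoc, H.w, Category.assoc])).unique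
    ⟨rfl, rfl⟩ ⟨h1.symm, h2.symm⟩

variable (E : ExactStructure 𝒜)

/-- Deflations (cokernel parts of conflations) are epic. -/
lemma defl_cancel {X Y Z : 𝒜} {i : X ⟶ Y} {p : Y ⟶ Z} (h : E.conflation i p)
    {T : 𝒜} {x y : Z ⟶ T} (hxy : p ≫ x = p ≫ y) : x = y := by
  have h0 : i ≫ (p ≫ x) = 0 := by rw [← Category.assoc, E.comp_zero h, Limits.zero_comp]
  exact (E.isCokernel h (p ≫ x) h0).unique rfl hxy.symm

/-- Inflations (kernel parts of conflations) are monic. -/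
lemma infl_cancel {X Y Z : 𝒜} {i : X ⟶ Y} {p : Y ⟶ Z} (h : E.conflation i p)
    {T : 𝒜} {x y : T ⟶ X} (hxy : x ≫ i = y ≫ i) : x = y := by
  have h0 : (x ≫ i) ≫ p = 0 := by rw [Category.assoc, E.comp_zero h, Limits.comp_zero]
  exact (E.isKernel h (x ≫ i) h0).unique rfl hxy.symm

/-- A conflation may be replaced by any other cokernel of its inflation. -/
lemma conflation_of_cok {X Y Z Z' : 𝒜} {h : X ⟶ Y} {s : Y ⟶ Z}
    (hs : E.conflation h s) {k : Y ⟶ Z'} (hk0 : h ≫ k = 0)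
    (huniv : ∀ {T : 𝒜} (f : Y ⟶ T), h ≫ f = 0 → ∃! g : Z' ⟶ T, k ≫ g = f) :
    E.conflation h k := by
  obtain ⟨c, hc, -⟩ := E.isCokernel hs k hk0
  obtain ⟨d, hd, -⟩ := huniv s (E.comp_zero hs)
  have hcd : c ≫ d = 𝟙 Z :=
    E.defl_cancel hs (by rw [← Category.assoc, hc, hd, Category.comp_id])
  have hdc : d ≫ c = 𝟙 Z' := by
    have h0 : h ≫ (k ≫ (d ≫ c)) = 0 := by rw [← Category.assoc, hk0, Limits.zero_comp]
    refine (huniv (k ≫ (d ≫ c)) h0).unique rfl ?_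
    rw [Category.comp_id, ← Category.assoc, hd, hc]
  have h' := E.iso_closed (Iso.refl X) (Iso.refl Y) (⟨c, d, hcd, hdc⟩ : Z ≅ Z') hs
  simpa [hc] using h'

/-- Pushout of a conflation along an arbitrary morphism: the pushed-out
inflation together with the induced map to the original cokernel is a
conflation. -/
lemma pushout_confl {P Q R S T : 𝒜} {m : P ⟶ Q} {e : Q ⟶ R} (hme : E.conflation m e)
    {f : P ⟶ S} {g : Q ⟶ T} {h : S ⟶ T} (H : RawPO m f g h)
    {k : T ⟶ R} (hgk : g ≫ k = e) (hhk : h ≫ k = 0) : E.conflation h k := by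
  obtain ⟨W₀, a₀, b₀, hpo₀, Z, p₀, hb₀⟩ := E.pushout_infl m f ⟨R, e, hme⟩
  have H₀ := rawPO_of_isPushout hpo₀
  obtain ⟨c₁, ⟨hc₁g, hc₁h⟩, -⟩ := H₀.desc g h H.w
  obtain ⟨c₂, ⟨hc₂g, hc₂h⟩, -⟩ := H.desc a₀ b₀ H₀.w
  have h12 : c₁ ≫ c₂ = 𝟙 W₀ := H₀.ext
    (by rw [← Category.assoc, hc₁g, hc₂g, Category.comp_id])
    (by rw [← Category.assoc, hc₁h, hc₂h, Category.comp_id])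
  have h21 : c₂ ≫ c₁ = 𝟙 T := H.ext
    (by rw [← Category.assoc, hc₂g, hc₁g, Category.comp_id])
    (by rw [← Category.assoc, hc₂h, hc₁h, Category.comp_id])
  have hconf : E.conflation h (c₂ ≫ p₀) := by
    have h' := E.iso_closed (Iso.refl S) (⟨c₁, c₂, h12, h21⟩ : W₀ ≅ T) (Iso.refl Z) hb₀
    simpa [hc₁h] using h'
  refine E.conflation_of_cok hconf hhk ?_
  intro T' t ht
  have hmgt : m ≫ (g ≫ t) = 0 := by
    rw [← Category.assoc, H.w, Category.assoc, ht, Limits.comp_zero]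
  obtain ⟨c, hc, hcu⟩ := E.isCokernel hme (g ≫ t) hmgt
  refine ⟨c, ?_, ?_⟩
  · refine H.ext ?_ ?_
    · rw [← Category.assoc, hgk]; exact hc
    · rw [← Category.assoc, hhk, Limits.zero_comp, ht]
  · intro c' hc'
    exact hcu c' (show e ≫ c' = g ≫ t by rw [← hgk, Category.assoc, hc'])

/-- The key sub-lemma: for a morphism `(𝟙, w, v)` of conflations
`(a : Y ⟶ W, r)` and `(j' : Y ⟶ Y', q')`, the middle map `w` is an inflation
iff the induced map `v` on cokernels is an inflation. -/
lemma sub {Y W C Y' C' : 𝒜} {a : Y ⟶ W} {r : W ⟶ C} (har : E.conflation a r)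
    {j' : Y ⟶ Y'} {q' : Y' ⟶ C'} (hj' : E.conflation j' q')
    {w : W ⟶ Y'} {v : C ⟶ C'} (hw : a ≫ w = j') (hsq : w ≫ q' = r ≫ v) :
    E.Inflation w ↔ E.Inflation v := by
  constructor
  · rintro ⟨D, t, hwt⟩
    -- the square (w, r, q', v) is a pushout
    have HPO : RawPO w r q' v := by
      refine ⟨hsq, ?_⟩
      intro T' α β hc
      have hj'α : j' ≫ α = 0 := by
        rw [← hw, Category.assoc, hc, ← Category.assoc, E.comp_zero har, Limits.zero_comp]
      obtain ⟨γ, hγ, hγu⟩ := E.isCokernel hj' α hj'α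
      refine ⟨γ, ⟨hγ, ?_⟩, ?_⟩
      · refine E.defl_cancel har ?_
        rw [← Category.assoc, ← hsq, Category.assoc, hγ]; exact hc
      · rintro γ' ⟨h1, -⟩
        exact hγu γ' h1
    have hj't : j' ≫ t = 0 := by rw [← hw, Category.assoc, E.comp_zero hwt, Limits.comp_zero]
    obtain ⟨k, hk, -⟩ := E.isCokernel hj' t hj't
    have hvk : v ≫ k = 0 := E.defl_cancel har (by
      rw [← Category.assoc, ← hsq, Category.assoc, hk, E.comp_zero hwt, Limits.comp_zero])
    exact ⟨D, k, E.pushout_confl hwt HPO hk hvk⟩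
  · rintro ⟨Z, s', hvs⟩
    obtain ⟨K, k₀, hk₀⟩ := E.defl_comp q' s' ⟨Y, j', hj'⟩ ⟨C, v, hvs⟩
    -- hk₀ : conflation k₀ (q' ≫ s')
    have hwqs : w ≫ (q' ≫ s') = 0 := by
      rw [← Category.assoc, hsq, Category.assoc, E.comp_zero hvs, Limits.comp_zero]
    obtain ⟨m, hm, -⟩ := E.isKernel hk₀ w hwqs
    have hkq : (k₀ ≫ q') ≫ s' = 0 := by rw [Category.assoc]; exact E.comp_zero hk₀
    obtain ⟨c, hcv, -⟩ := E.isKernel hvs (k₀ ≫ q') hkq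
    -- W has the universal property of the pullback of (v, q')
    have chase : ∀ {T : 𝒜} (α : T ⟶ C) (β : T ⟶ Y'), α ≫ v = β ≫ q' →
        ∃! t : T ⟶ W, t ≫ r = α ∧ t ≫ w = β := by
      intro T α β hαβ
      obtain ⟨P, g, ph, hpb, N, n, hn⟩ := E.pullback_defl r α ⟨Y, a, har⟩
      have hgr : g ≫ r = ph ≫ α := hpb.w
      have hδ : (g ≫ w - ph ≫ β) ≫ q' = 0 := by
        rw [Preadditive.sub_comp, Category.assoc, Category.assoc, hsq, ← hαβ,
          ← Category.assoc, ← Category.assoc, hgr, sub_self]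
      obtain ⟨ε, hε, -⟩ := E.isKernel hj' _ hδ
      -- hε : ε ≫ j' = g ≫ w - ph ≫ β
      have ht₀r : (g - ε ≫ a) ≫ r = ph ≫ α := by
        rw [Preadditive.sub_comp, Category.assoc, E.comp_zero har, Limits.comp_zero,
          sub_zero, hgr]
      have ht₀w : (g - ε ≫ a) ≫ w = ph ≫ β := by
        rw [Preadditive.sub_comp, Category.assoc, hw, hε, sub_sub_cancel]
      have hnt₀ : n ≫ (g - ε ≫ a) = 0 := by
        have h1 : (n ≫ (g - ε ≫ a)) ≫ r = 0 := by
          rw [Category.assoc, ht₀r, ← Category.assoc, E.comp_zero hn, Limits.zero_comp]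
        obtain ⟨φ, hφ, -⟩ := E.isKernel har (n ≫ (g - ε ≫ a)) h1
        have hφ0 : φ = 0 := by
          refine E.infl_cancel hj' (x := φ) (y := 0) ?_
          rw [Limits.zero_comp, ← hw, ← Category.assoc, hφ, Category.assoc, ht₀w,
            ← Category.assoc, E.comp_zero hn, Limits.zero_comp]
        rw [← hφ, hφ0, Limits.zero_comp]
      obtain ⟨t, ht, -⟩ := E.isCokernel hn (g - ε ≫ a) hnt₀
      -- ht : ph ≫ t = g - ε ≫ a
      have uniq : ∀ t' : T ⟶ W, t' ≫ r = α ∧ t' ≫ w = β →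
          ∀ t'' : T ⟶ W, t'' ≫ r = α ∧ t'' ≫ w = β → t' = t'' := by
        rintro t' ⟨h1, h2⟩ t'' ⟨h3, h4⟩
        have hd : (t' - t'') ≫ r = 0 := by rw [Preadditive.sub_comp, h1, h3, sub_self]
        obtain ⟨ψ, hψ, -⟩ := E.isKernel har (t' - t'') hd
        have hψ0 : ψ = 0 := by
          refine E.infl_cancel hj' (x := ψ) (y := 0) ?_
          rw [Limits.zero_comp, ← hw, ← Category.assoc, hψ, Preadditive.sub_comp, h2, h4,
            sub_self]
        have h5 : t' - t'' = 0 := by rw [← hψ, hψ0, Limits.zero_comp]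
        exact sub_eq_zero.mp h5
      have htr : (t : T ⟶ W) ≫ r = α :=
        E.defl_cancel hn (by rw [← Category.assoc, ht, ht₀r])
      have htw : t ≫ w = β :=
        E.defl_cancel hn (by rw [← Category.assoc, ht, ht₀w])
      exact ⟨t, ⟨htr, htw⟩, fun t' ht' => uniq t' ht' t ⟨htr, htw⟩⟩
    obtain ⟨nK, ⟨hnr, hnw⟩, -⟩ := chase c k₀ hcv
    have hmc : m ≫ c = r := E.infl_cancel hvs (by
      rw [Category.assoc, hcv, ← Category.assoc, hm]; exact hsq)
    have hmn : m ≫ nK = 𝟙 W :=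
      (chase r w hsq.symm).unique
        ⟨by rw [Category.assoc, hnr, hmc], by rw [Category.assoc, hnw, hm]⟩
        ⟨Category.id_comp r, Category.id_comp w⟩
    have hnm : nK ≫ m = 𝟙 K := E.infl_cancel hk₀ (by
      rw [Category.assoc, hm, hnw, Category.id_comp])
    have h' := E.iso_closed (⟨m, nK, hmn, hnm⟩ : W ≅ K) (Iso.refl Y') (Iso.refl Z) hk₀
    exact ⟨Z, q' ≫ s', by simpa [hm] using h'⟩

end ExactStructure

open CategoryTheory Limits in
/-- for a commutative square of inflations `i : X ⟶ Y`, `j : X ⟶ X'`,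
`i' : X' ⟶ Y'`, `j' : Y ⟶ Y'` in an exact category, the following are equivalent:
(1) the induced morphism `Coker i ⟶ Coker i'` is an inflation;
(2) the canonical morphism from the pushout `Y ⊔_X X'` to `Y'` is an inflation;
(3) the induced morphism `Coker j ⟶ Coker j'` is an inflation. -/
theorem stmt_2 {𝒜 : Type u} [CategoryTheory.Category.{v} 𝒜] [CategoryTheory.Preadditive 𝒜]
    (E : ExactStructure 𝒜)
    {X Y X' Y' CI CI' CJ CJ' W : 𝒜}
    {i : X ⟶ Y} {j : X ⟶ X'} {i' : X' ⟶ Y'} {j' : Y ⟶ Y'}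
    (hcomm : i ≫ j' = j ≫ i')
    {p : Y ⟶ CI} (hip : E.conflation i p)
    {p' : Y' ⟶ CI'} (hip' : E.conflation i' p')
    {q : X' ⟶ CJ} (hjq : E.conflation j q)
    {q' : Y' ⟶ CJ'} (hjq' : E.conflation j' q')
    (u : CI ⟶ CI') (hu : p ≫ u = j' ≫ p')
    (v : CJ ⟶ CJ') (hv : q ≫ v = i' ≫ q')
    {a : Y ⟶ W} {b : X' ⟶ W} (hpo : IsPushout i j a b)
    (w : W ⟶ Y') (hwa : a ≫ w = j') (hwb : b ≫ w = i') :
    (E.Inflation u ↔ E.Inflation w) ∧ (E.Inflation w ↔ E.Inflation v) := by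
  have HPO : ExactStructure.RawPO i j a b := ExactStructure.rawPO_of_isPushout hpo
  have HPO' : ExactStructure.RawPO j i b a := ExactStructure.rawPO_of_isPushout hpo.flip
  obtain ⟨r, ⟨hbr, har0⟩, -⟩ := HPO'.desc q 0 (by rw [E.comp_zero hjq, Limits.comp_zero])
  have hconfl_ar : E.conflation a r := E.pushout_confl hjq HPO' hbr har0
  obtain ⟨r₂, ⟨har₂, hbr₂⟩, -⟩ := HPO.desc p 0 (by rw [E.comp_zero hip, Limits.comp_zero])
  have hconfl_br₂ : E.conflation b r₂ := E.pushout_confl hip HPO har₂ hbr₂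
  have hsq1 : w ≫ q' = r ≫ v := HPO'.ext
    (by rw [← Category.assoc, hwb, ← Category.assoc, hbr]; exact hv.symm)
    (by rw [← Category.assoc, hwa, ← Category.assoc, har0, Limits.zero_comp]
        exact E.comp_zero hjq')
  have hsq2 : w ≫ p' = r₂ ≫ u := HPO.ext
    (by rw [← Category.assoc, hwa, ← Category.assoc, har₂]; exact hu.symm)
    (by rw [← Category.assoc, hwb, ← Category.assoc, hbr₂, Limits.zero_comp]
        exact E.comp_zero hip')
  have h1 : E.Inflation w ↔ E.Inflation v := E.sub hconfl_ar hjq' hwa hsq1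
  have h2 : E.Inflation w ↔ E.Inflation u := E.sub hconfl_br₂ hip' hwb hsq2
  exact ⟨h2.symm, h1⟩
end

section
/- Let A be an exact category and consider a commutative square of inflations i : X → Y, j : X → X', i' : X' → Y', j' : Y → Y' (so i' ∘ j = j' ∘ i) which is strictly inflated, i.e., the induced morphism Coker(i) → Coker(i') is an inflation. Then the square is a pullback: X, together with i and j, is the pullback of j' and i'. -/
open CategoryTheory Limits

universe v u

private lemma ExactStructure.infl_mono {𝒜 : Type u} [Category.{v} 𝒜] [Preadditive 𝒜]
    (E : ExactStructure 𝒜) {X Y : 𝒜} {f : X ⟶ Y} (hf : E.Inflation f) : Mono f := by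
  obtain ⟨Z, q, hq⟩ := hf
  refine ⟨fun {W} a b h => ?_⟩
  have hz : (a ≫ f) ≫ q = 0 := by rw [Category.assoc, E.comp_zero hq, Limits.comp_zero]
  obtain ⟨g, hg, huniq⟩ := E.isKernel hq (a ≫ f) hz
  rw [huniq a rfl, huniq b h.symm]

open CategoryTheory Limits in
/-- a strictly inflated commutative square of inflations
(`i : X ⟶ Y`, `j : X ⟶ X'`, `i' : X' ⟶ Y'`, `j' : Y ⟶ Y'`, where the induced
morphism `Coker i ⟶ Coker i'` is an inflation) is a pullback square: `X` with
`i` and `j` is the pullback of `j'` and `i'`. -/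
theorem stmt_3 {𝒜 : Type u} [CategoryTheory.Category.{v} 𝒜] [CategoryTheory.Preadditive 𝒜]
    (E : ExactStructure 𝒜)
    {X Y X' Y' CI CI' : 𝒜}
    {i : X ⟶ Y} {j : X ⟶ X'} {i' : X' ⟶ Y'} {j' : Y ⟶ Y'}
    (hcomm : i ≫ j' = j ≫ i')
    (hj : E.Inflation j) (hj' : E.Inflation j')
    {p : Y ⟶ CI} (hip : E.conflation i p)
    {p' : Y' ⟶ CI'} (hip' : E.conflation i' p')
    (u : CI ⟶ CI') (hu : p ≫ u = j' ≫ p')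
    (hstrict : E.Inflation u) :
    IsPullback i j j' i' := by
  have hu_mono : Mono u := E.infl_mono hstrict
  have hi'_mono : Mono i' := E.infl_mono ⟨CI', p', hip'⟩
  have key : ∀ {W : 𝒜} (s : W ⟶ Y) (t : W ⟶ X'), s ≫ j' = t ≫ i' →
      ∃! l : W ⟶ X, l ≫ i = s := by
    intro W s t hst
    apply E.isKernel hip
    have h0 : (s ≫ p) ≫ u = 0 ≫ u := by
      rw [Category.assoc, hu, ← Category.assoc, hst, Category.assoc, E.comp_zero hip',
        Limits.comp_zero, Limits.zero_comp]
    exact (cancel_mono u).mp h0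
  refine IsPullback.of_isLimit' ⟨hcomm⟩ ?_
  refine PullbackCone.IsLimit.mk _ (fun c => (key c.fst c.snd c.condition).choose)
    (fun c => (key c.fst c.snd c.condition).choose_spec.1) (fun c => ?_) (fun c m h1 h2 => ?_)
  · have hspec := (key c.fst c.snd c.condition).choose_spec.1
    have : ((key c.fst c.snd c.condition).choose ≫ j) ≫ i' = c.snd ≫ i' := by
      rw [Category.assoc, ← hcomm, ← Category.assoc, hspec, c.condition]
    exact (cancel_mono i').mp this
  · exact (key c.fst c.snd c.condition).choose_spec.2 m h1
end

section
/- Let L = L(p,q,r) be the abelian group generated by elements x, y, z subject to the relations p·x = q·y = r·z, and let H ≤ L be the cyclic subgroup generated by z. Then L is the disjoint union of the cosets H + i·x + j·y for 0 ≤ i ≤ p−1 and 0 ≤ j ≤ q−1; that is, every element of L is uniquely of the form n·z + i·x + j·y with n ∈ ℤ, 0 ≤ i ≤ p−1, 0 ≤ j ≤ q−1. -/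
/-- The abelian group `L(p,q,r)` with generators `x, y, z` and relations
`p•x = q•y = r•z`, realized as a quotient of `ℤ × ℤ × ℤ`. -/
def LL (p q r : ℕ) : Type :=
  (ℤ × ℤ × ℤ) ⧸ (AddSubgroup.closure {((p : ℤ), -(q : ℤ), (0 : ℤ)), ((0 : ℤ), (q : ℤ), -(r : ℤ))})

noncomputable instance (p q r : ℕ) : AddCommGroup (LL p q r) :=
  QuotientAddGroup.Quotient.addCommGroup _

/-- The images of the three generators in `L(p,q,r)`. -/
def LLx (p q r : ℕ) : LL p q r := QuotientAddGroup.mk ((1 : ℤ), (0 : ℤ), (0 : ℤ))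
def LLy (p q r : ℕ) : LL p q r := QuotientAddGroup.mk ((0 : ℤ), (1 : ℤ), (0 : ℤ))
def LLz (p q r : ℕ) : LL p q r := QuotientAddGroup.mk ((0 : ℤ), (0 : ℤ), (1 : ℤ))


lemma LL_mk_decomp (p q r : ℕ) (u v w : ℤ) :
    (QuotientAddGroup.mk (u, v, w) : LL p q r)
      = u • LLx p q r + v • LLy p q r + w • LLz p q r := by
  simp only [LLx, LLy, LLz, ← QuotientAddGroup.mk_zsmul, ← QuotientAddGroup.mk_add]
  congr 1
  simp [Prod.ext_iff]

lemma LL_mem_iff (p q r : ℕ) (v : ℤ × ℤ × ℤ) :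
    v ∈ AddSubgroup.closure {((p : ℤ), -(q : ℤ), (0 : ℤ)), ((0 : ℤ), (q : ℤ), -(r : ℤ))} ↔
      ∃ a b : ℤ, v = (a * p, -(a * q) + b * q, -(b * r)) := by
  rw [AddSubgroup.mem_closure_pair]
  constructor
  · rintro ⟨a, b, rfl⟩
    exact ⟨a, b, by simp [Prod.ext_iff, mul_comm]⟩
  · rintro ⟨a, b, rfl⟩
    exact ⟨a, b, by simp [Prod.ext_iff, mul_comm]⟩

/-- every element of `L(p,q,r)` is uniquely of the form
`n•z + i•x + j•y` with `n ∈ ℤ`, `0 ≤ i ≤ p−1` and `0 ≤ j ≤ q−1`; i.e. `L` is the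
disjoint union of the cosets `H + i•x + j•y` where `H = ⟨z⟩`. -/
theorem stmt_9 (p q r : ℕ) (hp : 2 ≤ p) (hq : 2 ≤ q) (hr : 2 ≤ r) (l : LL p q r) :
    ∃! w : ℤ × ℤ × ℤ,
      (0 ≤ w.2.1 ∧ w.2.1 < (p : ℤ) ∧ 0 ≤ w.2.2 ∧ w.2.2 < (q : ℤ)) ∧
      l = w.1 • LLz p q r + w.2.1 • LLx p q r + w.2.2 • LLy p q r := by
  have hp0 : (0:ℤ) < p := by exact_mod_cast Nat.lt_of_lt_of_le Nat.zero_lt_two hp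
  have hq0 : (0:ℤ) < q := by exact_mod_cast Nat.lt_of_lt_of_le Nat.zero_lt_two hq
  obtain ⟨⟨c1, c2, c3⟩, rfl⟩ := QuotientAddGroup.mk_surjective l
  set a : ℤ := c1 / p with ha
  set i : ℤ := c1 % p with hi
  set b : ℤ := (c2 + a * q) / q with hb
  set j : ℤ := (c2 + a * q) % q with hj
  set n : ℤ := c3 + b * r with hn
  have key : (QuotientAddGroup.mk (c1, c2, c3) : LL p q r)
      = (QuotientAddGroup.mk (i, j, n) : LL p q r) := by
    rw [QuotientAddGroup.eq_iff_sub_mem, LL_mem_iff]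
    refine ⟨a, b, ?_⟩
    have h1 : (p:ℤ) * a + i = c1 := Int.mul_ediv_add_emod c1 p
    have h2 : (q:ℤ) * b + j = c2 + a * q := Int.mul_ediv_add_emod (c2 + a * q) q
    simp only [Prod.mk_sub_mk, Prod.mk.injEq]
    exact ⟨by linarith, by linarith, by rw [hn]; ring⟩
  have key' : (QuotientAddGroup.mk (c1, c2, c3) : LL p q r)
      = n • LLz p q r + i • LLx p q r + j • LLy p q r := by
    rw [key, LL_mk_decomp]; abel
  refine ⟨(n, i, j), ⟨⟨Int.emod_nonneg _ hp0.ne', Int.emod_lt_of_pos _ hp0,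
      Int.emod_nonneg _ hq0.ne', Int.emod_lt_of_pos _ hq0⟩, key'⟩, ?_⟩
  rintro ⟨n', i', j'⟩ ⟨⟨hi'0, hi'p, hj'0, hj'q⟩, heq⟩
  dsimp only at hi'0 hi'p hj'0 hj'q heq
  have hjb : (0:ℤ) ≤ j := Int.emod_nonneg _ hq0.ne'
  have hjq : j < q := Int.emod_lt_of_pos _ hq0
  have hib : (0:ℤ) ≤ i := Int.emod_nonneg _ hp0.ne'
  have hip : i < p := Int.emod_lt_of_pos _ hp0
  have hmk : (QuotientAddGroup.mk (i', j', n') : LL p q r) = QuotientAddGroup.mk (i, j, n) := by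
    rw [LL_mk_decomp, LL_mk_decomp]
    have h2 := key'.symm.trans heq
    have h3 : i' • LLx p q r + j' • LLy p q r + n' • LLz p q r
        = n' • LLz p q r + i' • LLx p q r + j' • LLy p q r := by abel
    rw [h3, ← h2]; abel
  rw [QuotientAddGroup.eq_iff_sub_mem, LL_mem_iff] at hmk
  obtain ⟨A, B, hAB⟩ := hmk
  simp only [Prod.mk_sub_mk, Prod.mk.injEq] at hAB
  obtain ⟨e1, e2, e3⟩ := hAB
  have hA : A = 0 := by
    have h1 : A * (p:ℤ) < 1 * p := by linarith
    have h2 : (-1 : ℤ) * p < A * p := by linarith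
    have := lt_of_mul_lt_mul_right h1 hp0.le
    have := lt_of_mul_lt_mul_right h2 hp0.le
    omega
  subst hA
  have hB : B = 0 := by
    have h1 : B * (q:ℤ) < 1 * q := by linarith
    have h2 : (-1 : ℤ) * q < B * q := by linarith
    have := lt_of_mul_lt_mul_right h1 hq0.le
    have := lt_of_mul_lt_mul_right h2 hq0.le
    omega
  subst hB
  simp only [zero_mul, neg_zero, zero_add, sub_eq_zero] at e1 e2 e3
  simp only [Prod.mk.injEq]
  exact ⟨e3, e1, e2⟩
end

section
/- Let K be a field, p, q, r ≥ 2 integers, L = L(p,q,r) the abelian group with generators x, y, z and relations p·x = q·y = r·z, and H = ℤ·z ≤ L. Grade the algebra S = K[X, Y, Z]/(X^p + Y^q + Z^r) by L via deg X = x, deg Y = y, deg Z = z. Then the subalgebra S_H = ⊕_{l ∈ H} S_l of elements whose homogeneous components have degrees in H equals K[X^p, Z] and is isomorphic as a K-algebra to a polynomial algebra in two variables. -/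
open MvPolynomial

/-- The weights giving the `L(p,q,r)`-grading of `K[X,Y,Z]`:
`deg X = x`, `deg Y = y`, `deg Z = z`. -/
def LLw (p q r : ℕ) : Fin 3 → LL p q r := ![LLx p q r, LLy p q r, LLz p q r]

/-!
In `L = L(p,q,r)` the element `a•x + b•y + c•z` lies in `ℤ•z` exactly when `p ∣ a` and
`q ∣ b`, since the relations only move the first two coordinates by multiples of `p` and `q`.
Hence the polynomials all of whose monomials have degree in `ℤ•z` form `K[X^p, Y^q, Z]`, whose
image in `S` is `K[x^p, z]` because `y^q = -(x^p + z^r)`.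

For the algebraic independence of `x^p` and `z`: if `f(x^p, z) = 0` in `S`, then
`X^p + Y^q + Z^r` divides `f(X^p, Z)`. Substituting `X ↦ U`, `Y ↦ T`, `Z ↦ V^p` turns the divisor
into a monic polynomial of degree `q > 0` in `T` and `f(X^p, Z)` into the constant
`f(U^p, V^p)`, which must therefore vanish; so `f = 0`.
-/

namespace MvPolynomial

variable {σ R M : Type*} [CommSemiring R]

variable (R) in
def monomialSubalgebra (N : AddSubmonoid (σ →₀ ℕ)) : Subalgebra R (MvPolynomial σ R) where
  carrier := {f | ∀ d ∈ f.support, d ∈ N}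
  mul_mem' {f g} hf hg d hd := by
    classical
    obtain ⟨a, ha, b, hb, rfl⟩ := Finset.mem_add.mp (support_mul f g hd)
    exact N.add_mem (hf a ha) (hg b hb)
  add_mem' {f g} hf hg d hd := by
    classical
    rcases Finset.mem_union.mp (support_add hd) with h | h
    exacts [hf d h, hg d h]
  algebraMap_mem' c d hd := by
    classical
    rw [mem_support_iff, algebraMap_eq, coeff_C] at hd
    split_ifs at hd with h
    · exact h ▸ N.zero_mem
    · exact absurd rfl hd

variable {N : AddSubmonoid (σ →₀ ℕ)}

theorem monomial_mem_monomialSubalgebra {d : σ →₀ ℕ} (hd : d ∈ N) (c : R) :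
    monomial d c ∈ monomialSubalgebra R N :=
  fun _ he ↦ Finset.mem_singleton.mp (support_monomial_subset he) ▸ hd

theorem monomialSubalgebra_le {S : Subalgebra R (MvPolynomial σ R)}
    (h : ∀ d ∈ N, monomial d 1 ∈ S) : monomialSubalgebra R N ≤ S := by
  intro f hf
  rw [f.as_sum]
  refine S.sum_mem fun d hd ↦ ?_
  rw [← mul_one (coeff d f), ← smul_eq_mul, ← smul_monomial]
  exact S.smul_mem (h d (hf d hd)) _

theorem iSup_weightedHomogeneousSubmodule [AddCommMonoid M] (w : σ → M) (H : AddSubmonoid M) :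
    ⨆ m : H, weightedHomogeneousSubmodule R w m =
      Subalgebra.toSubmodule (monomialSubalgebra R (H.comap (Finsupp.weight w))) := by
  apply le_antisymm
  · refine iSup_le fun m f hf d hd ↦ ?_
    rw [AddSubmonoid.mem_comap, hf (mem_support_iff.mp hd)]
    exact m.2
  · intro f hf
    rw [f.as_sum]
    refine Submodule.sum_mem _ fun d hd ↦ ?_
    exact Submodule.mem_iSup_of_mem (ι := H) ⟨Finsupp.weight w d, hf d hd⟩
      (isWeightedHomogeneous_monomial _ _ _ rfl)

theorem monomial_one_mem_adjoin_X_pow (n : σ → ℕ) {d : σ →₀ ℕ} (hd : ∀ i, n i ∣ d i) :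
    monomial d (1 : R) ∈ Algebra.adjoin R (Set.range fun i ↦ X i ^ n i) := by
  rw [← prod_X_pow_eq_monomial]
  refine Subalgebra.prod_mem _ fun i _ ↦ ?_
  obtain ⟨k, hk⟩ := hd i
  rw [hk, pow_mul]
  exact pow_mem (Algebra.subset_adjoin (Set.mem_range_self i)) k

end MvPolynomial

namespace LL

variable {p q r : ℕ}

variable (p q r) in
def mk : ℤ × ℤ × ℤ →+ LL p q r := QuotientAddGroup.mk' _

theorem mk_eq_mk_iff {a b : ℤ × ℤ × ℤ} :
    mk p q r a = mk p q r b ↔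
      ∃ k m : ℤ, k • ((p : ℤ), -(q : ℤ), (0 : ℤ)) + m • ((0 : ℤ), (q : ℤ), -(r : ℤ)) = -a + b :=
  QuotientAddGroup.eq.trans (AddSubgroup.mem_closure_pair ..)

theorem weight_LLw (d : Fin 3 →₀ ℕ) :
    Finsupp.weight (LLw p q r) d = mk p q r ((d 0 : ℤ), (d 1 : ℤ), (d 2 : ℤ)) := by
  rw [Finsupp.weight_apply, Finsupp.sum_fintype _ _ (by simp), Fin.sum_univ_three]
  change d 0 • mk p q r (1, 0, 0) + d 1 • mk p q r (0, 1, 0) + d 2 • mk p q r (0, 0, 1) = _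
  simp only [← map_nsmul, ← map_add]
  congr 1
  simp

theorem zsmul_LLz (n : ℤ) : n • LLz p q r = mk p q r ((0 : ℤ), (0 : ℤ), n) := by
  change n • mk p q r (0, 0, 1) = _
  rw [← map_zsmul]
  simp

theorem weight_LLw_mem_zmultiples_iff {d : Fin 3 →₀ ℕ} :
    Finsupp.weight (LLw p q r) d ∈ AddSubgroup.zmultiples (LLz p q r) ↔ p ∣ d 0 ∧ q ∣ d 1 := by
  simp only [AddSubgroup.mem_zmultiples_iff, zsmul_LLz, weight_LLw, mk_eq_mk_iff, Prod.ext_iff]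
  simp only [Prod.smul_mk, smul_eq_mul, Prod.mk_add_mk, Prod.neg_mk]
  simp only [← Int.natCast_dvd_natCast (m := p), ← Int.natCast_dvd_natCast (m := q)]
  constructor
  · rintro ⟨n, k, m, h0, h1, h2⟩
    exact ⟨⟨k, by linear_combination -h0⟩, ⟨m - k, by linear_combination -h1⟩⟩
  · rintro ⟨⟨a, ha⟩, ⟨b, hb⟩⟩
    exact ⟨r * (a + b) + d 2, a, a + b, by linear_combination -ha, by linear_combination -hb,
      by ring⟩

end LL

theorem Polynomial.Monic.eq_zero_of_dvd_C {R : Type*} [CommSemiring R] {P : Polynomial R}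
    (hP : P.Monic) (hdeg : 0 < P.natDegree) {a : R} (h : P ∣ Polynomial.C a) : a = 0 := by
  by_contra ha
  exact hP.not_dvd_of_natDegree_lt (Polynomial.C_ne_zero.mpr ha)
    (by rwa [Polynomial.natDegree_C]) h

section Brieskorn

variable {R : Type*} {p q r : ℕ}

local notation "π" => Ideal.Quotient.mkₐ R
  (Ideal.span {(X 0 : MvPolynomial (Fin 3) R) ^ p + X 1 ^ q + X 2 ^ r})

theorem monomialSubalgebra_comap_weight_eq_adjoin [CommSemiring R] :
    monomialSubalgebra R ((AddSubgroup.zmultiples (LLz p q r)).toAddSubmonoid.comap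
      (Finsupp.weight (LLw p q r))) = Algebra.adjoin R {X 0 ^ p, X 1 ^ q, X 2} := by
  apply le_antisymm
  · refine monomialSubalgebra_le fun d hd ↦ ?_
    obtain ⟨hpd, hqd⟩ := LL.weight_LLw_mem_zmultiples_iff.mp hd
    refine Algebra.adjoin_mono ?_ (monomial_one_mem_adjoin_X_pow ![p, q, 1] fun i ↦ ?_)
    · rw [Set.range_subset_iff]
      intro i
      fin_cases i <;> simp
    · fin_cases i <;> simp [hpd, hqd]
  · rw [Algebra.adjoin_le_iff, Set.insert_subset_iff, Set.insert_subset_iff,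
      Set.singleton_subset_iff, X_pow_eq_monomial, X_pow_eq_monomial, X]
    refine ⟨?_, ?_, ?_⟩ <;>
      exact monomial_mem_monomialSubalgebra (LL.weight_LLw_mem_zmultiples_iff.mpr (by simp)) 1

theorem mk_X_one_pow [CommRing R] : π (X 1) ^ q = -(π (X 0) ^ p + π (X 2) ^ r) := by
  have h : π ((X 0 : MvPolynomial (Fin 3) R) ^ p + X 1 ^ q + X 2 ^ r) = 0 := by
    rw [Ideal.Quotient.mkₐ_eq_mk, Ideal.Quotient.eq_zero_iff_mem]
    exact Ideal.mem_span_singleton_self _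
  simp only [map_add, map_pow] at h
  linear_combination h

theorem map_adjoin_X_pow [CommRing R] :
    (Algebra.adjoin R {X 0 ^ p, X 1 ^ q, X 2}).map π = Algebra.adjoin R {π (X 0) ^ p, π (X 2)} := by
  rw [AlgHom.map_adjoin, Set.image_insert_eq, Set.image_insert_eq, Set.image_singleton,
    map_pow, map_pow]
  apply le_antisymm
  · have hx : π (X 0) ^ p ∈ Algebra.adjoin R {π (X 0) ^ p, π (X 2)} :=
      Algebra.subset_adjoin (by simp)
    have hz : π (X 2) ∈ Algebra.adjoin R {π (X 0) ^ p, π (X 2)} :=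
      Algebra.subset_adjoin (by simp)
    rw [Algebra.adjoin_le_iff, Set.insert_subset_iff, Set.insert_subset_iff,
      Set.singleton_subset_iff, mk_X_one_pow]
    exact ⟨hx, neg_mem (add_mem hx (pow_mem hz r)), hz⟩
  · exact Algebra.adjoin_mono (by simp [Set.insert_subset_iff])

theorem algebraicIndependent_mk_X_zero_pow_mk_X_two [CommRing R] (hp : 0 < p) (hq : 0 < q) :
    AlgebraicIndependent R ![π (X 0) ^ p, π (X 2)] := by
  nontriviality R
  rw [algebraicIndependent_iff]
  intro f hf
  have hdvd : (X 0 ^ p + X 1 ^ q + X 2 ^ r : MvPolynomial (Fin 3) R) ∣ aeval ![X 0 ^ p, X 2] f := by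
    rw [← Ideal.mem_span_singleton, ← Ideal.Quotient.eq_zero_iff_mem, ← Ideal.Quotient.mkₐ_eq_mk R,
      comp_aeval_apply]
    convert hf using 2
    ext i
    fin_cases i <;> simp
  let ψ : MvPolynomial (Fin 3) R →ₐ[R] Polynomial (MvPolynomial (Fin 2) R) :=
    aeval ![Polynomial.C (X 0), Polynomial.X, Polynomial.C (X 1 ^ p)]
  have hψf : ψ (aeval ![X 0 ^ p, X 2] f) = Polynomial.C (expand p f) := by
    change (ψ.comp (aeval _)) f = (Polynomial.CAlgHom.comp (expand p)) f
    congr 1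
    ext i
    fin_cases i <;> simp [ψ, Polynomial.CAlgHom]
  have hψw : ψ (X 0 ^ p + X 1 ^ q + X 2 ^ r) =
      Polynomial.X ^ q + Polynomial.C ((X 0 : MvPolynomial (Fin 2) R) ^ p + X 1 ^ (p * r)) := by
    simp only [ψ, map_add, map_pow, aeval_X, Matrix.cons_val_zero, Matrix.cons_val_one,
      Matrix.cons_val, pow_mul]
    ring
  have h := map_dvd ψ hdvd
  rw [hψf, hψw] at h
  refine (expand_eq_zero hp).mp ((Polynomial.monic_X_pow_add_C _ hq.ne').eq_zero_of_dvd_C ?_ h)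
  rwa [Polynomial.natDegree_X_pow_add_C]

end Brieskorn

theorem stmt_12_general (K : Type) [Field K] (p q r : ℕ) (hp : 2 ≤ p) (hq : 2 ≤ q) :
    Submodule.map
        (Ideal.Quotient.mkₐ K (Ideal.span
          {(X 0 : MvPolynomial (Fin 3) K) ^ p + X 1 ^ q + X 2 ^ r})).toLinearMap
        (⨆ l : AddSubgroup.zmultiples (LLz p q r),
          weightedHomogeneousSubmodule K (LLw p q r) (l : LL p q r)) =
      Subalgebra.toSubmodule (Algebra.adjoin K
        {Ideal.Quotient.mkₐ K (Ideal.span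
          {(X 0 : MvPolynomial (Fin 3) K) ^ p + X 1 ^ q + X 2 ^ r}) (X 0) ^ p,
         Ideal.Quotient.mkₐ K (Ideal.span
          {(X 0 : MvPolynomial (Fin 3) K) ^ p + X 1 ^ q + X 2 ^ r}) (X 2)}) ∧
    Nonempty ((Algebra.adjoin K
        {Ideal.Quotient.mkₐ K (Ideal.span
          {(X 0 : MvPolynomial (Fin 3) K) ^ p + X 1 ^ q + X 2 ^ r}) (X 0) ^ p,
         Ideal.Quotient.mkₐ K (Ideal.span
          {(X 0 : MvPolynomial (Fin 3) K) ^ p + X 1 ^ q + X 2 ^ r}) (X 2)}) ≃ₐ[K]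
      MvPolynomial (Fin 2) K) := by
  have hH := iSup_weightedHomogeneousSubmodule (R := K) (LLw p q r)
    (AddSubgroup.zmultiples (LLz p q r)).toAddSubmonoid
  refine ⟨(congrArg _ hH).trans ?_, ?_⟩
  · rw [← Subalgebra.map_toSubmodule, monomialSubalgebra_comap_weight_eq_adjoin, map_adjoin_X_pow]
  · rw [← Matrix.range_cons_cons_empty _ _ ![]]
    have hind := algebraicIndependent_mk_X_zero_pow_mk_X_two (R := K) (p := p) (q := q) (r := r)
      (by omega) (by omega)
    exact ⟨hind.aevalEquiv.symm⟩

/-- let `S = K[X,Y,Z]/(X^p + Y^q + Z^r)` be graded by `L = L(p,q,r)`,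
and `H = ℤ·z ≤ L`.  Then the subalgebra `S_H` of elements whose homogeneous
components have degrees in `H` equals `K[X^p, Z]`, and it is isomorphic as a
`K`-algebra to a polynomial algebra in two variables. -/
theorem stmt_12 (K : Type) [Field K] (p q r : ℕ) (hp : 2 ≤ p) (hq : 2 ≤ q) (hr : 2 ≤ r) :
    Submodule.map
        (Ideal.Quotient.mkₐ K (Ideal.span
          {(X 0 : MvPolynomial (Fin 3) K) ^ p + X 1 ^ q + X 2 ^ r})).toLinearMap
        (⨆ l : AddSubgroup.zmultiples (LLz p q r),
          weightedHomogeneousSubmodule K (LLw p q r) (l : LL p q r)) =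
      Subalgebra.toSubmodule (Algebra.adjoin K
        {Ideal.Quotient.mkₐ K (Ideal.span
          {(X 0 : MvPolynomial (Fin 3) K) ^ p + X 1 ^ q + X 2 ^ r}) (X 0) ^ p,
         Ideal.Quotient.mkₐ K (Ideal.span
          {(X 0 : MvPolynomial (Fin 3) K) ^ p + X 1 ^ q + X 2 ^ r}) (X 2)}) ∧
    Nonempty ((Algebra.adjoin K
        {Ideal.Quotient.mkₐ K (Ideal.span
          {(X 0 : MvPolynomial (Fin 3) K) ^ p + X 1 ^ q + X 2 ^ r}) (X 0) ^ p,
         Ideal.Quotient.mkₐ K (Ideal.span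
          {(X 0 : MvPolynomial (Fin 3) K) ^ p + X 1 ^ q + X 2 ^ r}) (X 2)}) ≃ₐ[K]
      MvPolynomial (Fin 2) K) :=
  stmt_12_general K p q r hp hq
end

section
/- Let H be a group and H₁ the group obtained from H by adjoining one new generator x subject to the relations hx = xh for all h ∈ H and x^{n+1} = c, where c is a fixed central element of H and n ≥ 1. Then H₁ decomposes as the disjoint union H ∪ Hx ∪ Hx² ∪ ⋯ ∪ Hxⁿ; in particular every element of H₁ is uniquely of the form h·x^t with h ∈ H and 0 ≤ t ≤ n. -/
/-- let `H` be a group, `c` a central element of `H`, `n ≥ 1`, and let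
`H₁ = (H × ℤ)/⟨(c, −(n+1))⟩` be the group obtained from `H` by adjoining a central
generator `x` with `x^(n+1) = c` (here the second coordinate, written multiplicatively
as `Multiplicative ℤ`, records the exponent of `x`).  Then `H₁` is the disjoint union
`H ∪ Hx ∪ ⋯ ∪ Hxⁿ`: every element of `H₁` is uniquely of the form `h·xᵗ` with `h ∈ H`
and `0 ≤ t ≤ n`. -/
theorem stmt_13 {H : Type*} [Group H] (n : ℕ) (hn : 1 ≤ n)
    (c : H) (hc : c ∈ Subgroup.center H)
    [(Subgroup.zpowers ((c, Multiplicative.ofAdd (-(n + 1 : ℤ))) : H × Multiplicative ℤ)).Normal]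
    (g : (H × Multiplicative ℤ) ⧸
        Subgroup.zpowers ((c, Multiplicative.ofAdd (-(n + 1 : ℤ))) : H × Multiplicative ℤ)) :
    ∃! ht : H × Fin (n + 1),
      g = QuotientGroup.mk (ht.1, Multiplicative.ofAdd ((ht.2 : ℕ) : ℤ)) := by
  obtain ⟨⟨h, m⟩, rfl⟩ := QuotientGroup.mk_surjective g
  set z : H × Multiplicative ℤ := (c, Multiplicative.ofAdd (-(n + 1 : ℤ))) with hz
  -- uniqueness of canonical forms
  have key : ∀ (h₁ h₂ : H) (t₁ t₂ : Fin (n+1)),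
      (QuotientGroup.mk (h₁, Multiplicative.ofAdd ((t₁:ℕ):ℤ)) :
        (H × Multiplicative ℤ) ⧸ Subgroup.zpowers z)
        = QuotientGroup.mk (h₂, Multiplicative.ofAdd ((t₂:ℕ):ℤ)) →
      (h₁, t₁) = (h₂, t₂) := by
    intro h₁ h₂ t₁ t₂ heq
    rw [QuotientGroup.eq] at heq
    obtain ⟨k, hk⟩ := heq
    have hsnd := congrArg (fun p => Multiplicative.toAdd p.2) hk
    simp [hz, Prod.pow_snd] at hsnd
    have hlt₁ : ((t₁ : ℕ) : ℤ) < n + 1 := by exact_mod_cast t₁.isLt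
    have hlt₂ : ((t₂ : ℕ) : ℤ) < n + 1 := by exact_mod_cast t₂.isLt
    have hge₁ : (0 : ℤ) ≤ ((t₁ : ℕ) : ℤ) := Int.natCast_nonneg _
    have hge₂ : (0 : ℤ) ≤ ((t₂ : ℕ) : ℤ) := Int.natCast_nonneg _
    have hk0 : k = 0 := by
      rcases lt_trichotomy k 0 with h | h | h
      · nlinarith
      · exact h
      · nlinarith
    subst hk0
    simp only [zpow_zero] at hk
    have hfst := congrArg (fun p => p.1) hk
    simp at hfst
    have ht : t₁ = t₂ := by
      apply Fin.ext
      have h2 : ((t₁ : ℕ) : ℤ) = ((t₂ : ℕ) : ℤ) := by linarith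
      exact_mod_cast h2
    have hh : h₁ = h₂ := inv_mul_eq_one.mp hfst.symm
    rw [ht, hh]
  set m' : ℤ := Multiplicative.toAdd m with hm'
  set q : ℤ := m' / ((n : ℤ) + 1) with hq
  set r : ℤ := m' % ((n : ℤ) + 1) with hr
  have hNpos : (0 : ℤ) < (n : ℤ) + 1 := by positivity
  have hr0 : 0 ≤ r := Int.emod_nonneg _ (by omega)
  have hrlt : r < (n : ℤ) + 1 := Int.emod_lt_of_pos _ hNpos
  have hrn : r.toNat < n + 1 := by omega
  have hdiv : r + ((n : ℤ) + 1) * q = m' := Int.emod_add_mul_ediv m' ((n : ℤ) + 1)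
  have hrcast : ((r.toNat : ℕ) : ℤ) = r := Int.toNat_of_nonneg hr0
  have hmain : (QuotientGroup.mk (h, m) : (H × Multiplicative ℤ) ⧸ Subgroup.zpowers z)
      = QuotientGroup.mk (h * c ^ q, Multiplicative.ofAdd ((r.toNat : ℕ) : ℤ)) := by
    rw [QuotientGroup.eq]
    refine ⟨q, ?_⟩
    apply Prod.ext
    · show (z ^ q).1 = _
      simp only [hz, Prod.pow_fst, Prod.fst_mul, Prod.fst_inv, inv_mul_cancel_left]
    · show (z ^ q).2 = _
      apply Multiplicative.toAdd.injective
      simp only [hz, Prod.pow_snd, Prod.snd_mul, Prod.snd_inv, toAdd_zpow, toAdd_mul,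
        toAdd_inv, toAdd_ofAdd, smul_eq_mul, hrcast]
      rw [← hm']
      linarith
  refine ⟨(h * c ^ q, ⟨r.toNat, hrn⟩), hmain, ?_⟩
  rintro ⟨h', t'⟩ heq'
  exact key _ _ _ _ (heq'.symm.trans hmain)
end

section
/- Let S be an H-graded ring, τ a graded automorphism of S, and form the skew polynomial ring S[x; τ] with relation x·a = τ(a)·x for a ∈ S. Let c be a central element of H with a homogeneous regular normal ω ∈ S of degree c, suppose τ(ω) = ω, and let H₁ be the group obtained from H by adjoining x̄ central over H with x̄^{n+1} = c. Grade S[x;τ] by H₁ with deg(x) = x̄ and S in its original degrees. Then the element x^{n+1} + ω of S[x; τ] is homogeneous of degree c, and hence the quotient ring R₁ = S[x;τ]/(x^{n+1} + ω) inherits an H₁-grading. -/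
/-!
Since `x̄ ^ (n + 1) = c` in `H₁`, the monomials `x ^ (n + 1)` and `ω` both have degree `c`,
provided `1 ∈ S` is homogeneous of a degree that dies in `H₁`. That comes for free: the
`H₁`-grading of `S[x; τ]` is multiplicative, because `x ^ i * a = τ^[i] a * x ^ i` and `τ`
preserves degrees, and in any ring decomposed by a multiplicative grading over a cancellative
monoid the unit has degree `1`. Finally, the two-sided ideal generated by a homogeneous element
`t` is spanned by the homogeneous products `a * t * b` with `a`, `b` homogeneous.
-/

section MulGraded

open DirectSum

variable {ι R : Type*} [DecidableEq ι] [Ring R] (𝒯 : ι → AddSubgroup R) [Decomposition 𝒯]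

theorem coe_decompose_mul_of_left_mem_of_mul_mem [LeftCancelMonoid ι]
    (hmul : ∀ {g g' : ι} {u v : R}, u ∈ 𝒯 g → v ∈ 𝒯 g' → u * v ∈ 𝒯 (g * g'))
    {a : R} {h : ι} (ha : a ∈ 𝒯 h) (b : R) (g : ι) :
    (decompose 𝒯 (a * b) (h * g) : R) = a * decompose 𝒯 b g := by
  induction b using Decomposition.inductionOn 𝒯 with
  | zero => simp
  | @homogeneous g' b =>
    by_cases hg : g' = g
    · subst hg
      rw [decompose_of_mem_same 𝒯 (hmul ha b.2), decompose_of_mem_same 𝒯 b.2]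
    · rw [decompose_of_mem_ne 𝒯 (hmul ha b.2) (fun h' => hg (mul_left_cancel h')),
        decompose_of_mem_ne 𝒯 b.2 hg, mul_zero]
  | add b b' hb hb' =>
    rw [mul_add, decompose_add, DirectSum.add_apply, AddMemClass.coe_add, hb, hb',
      decompose_add, DirectSum.add_apply, AddMemClass.coe_add, mul_add]

theorem one_mem_of_mul_mem [LeftCancelMonoid ι]
    (hmul : ∀ {g g' : ι} {u v : R}, u ∈ 𝒯 g → v ∈ 𝒯 g' → u * v ∈ 𝒯 (g * g')) :
    (1 : R) ∈ 𝒯 1 := by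
  classical
  have hcomp : ∀ g ≠ 1, ∀ u : R, u * decompose 𝒯 1 g = 0 := by
    intro g hg u
    induction u using Decomposition.inductionOn 𝒯 with
    | zero => simp
    | @homogeneous g' u =>
      rw [← coe_decompose_mul_of_left_mem_of_mul_mem 𝒯 hmul u.2, mul_one,
        decompose_of_mem_ne 𝒯 u.2 fun h' => hg (mul_eq_left.1 h'.symm)]
    | add u u' hu hu' => rw [add_mul, hu, hu', add_zero]
  rw [← sum_support_decompose 𝒯 (1 : R), Finset.sum_eq_single 1]
  · exact (decompose 𝒯 1 1).2
  · intro g _ hg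
    simpa using hcomp g hg 1
  · intro h1
    simp [DFinsupp.notMem_support_iff.1 h1]

theorem closure_mul_mul_eq_closure_homogeneous [Monoid ι]
    (hmul : ∀ {g g' : ι} {u v : R}, u ∈ 𝒯 g → v ∈ 𝒯 g' → u * v ∈ 𝒯 (g * g'))
    {t : R} {g₀ : ι} (ht : t ∈ 𝒯 g₀) :
    AddSubgroup.closure {s | ∃ a b : R, s = a * t * b} =
      AddSubgroup.closure {s | s ∈ AddSubgroup.closure {s | ∃ a b : R, s = a * t * b} ∧
        ∃ g, s ∈ 𝒯 g} := by
  refine le_antisymm ?_ (AddSubgroup.closure_le _ |>.2 fun s hs => hs.1)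
  rw [AddSubgroup.closure_le]
  rintro _ ⟨a, b, rfl⟩
  induction a using Decomposition.inductionOn 𝒯 generalizing b with
  | zero => simp
  | @homogeneous g a =>
    induction b using Decomposition.inductionOn 𝒯 with
    | zero => simp
    | @homogeneous g' b =>
      exact AddSubgroup.subset_closure
        ⟨AddSubgroup.subset_closure ⟨a, b, rfl⟩, g * g₀ * g', hmul (hmul a.2 ht) b.2⟩
    | add b b' hb hb' => rw [mul_add]; exact add_mem hb hb'
  | add a a' ha ha' => rw [add_mul, add_mul]; exact add_mem (ha b) (ha' b)

end MulGraded

section SkewPolynomial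

variable {H G S T : Type*} [Monoid H] [Monoid G] [Ring S] [Ring T]
  {𝒜 : H → AddSubgroup S} {𝒯 : G → AddSubgroup T} {ι : S →+* T} {x : T} {τ : S ≃+* S}
  {φ : H × Multiplicative ℤ →* G}

theorem pow_mul_eq_iterate_mul_pow (hskew : ∀ a : S, x * ι a = ι (τ a) * x) (i : ℕ) (a : S) :
    x ^ i * ι a = ι (τ^[i] a) * x ^ i := by
  induction i generalizing a with
  | zero => simp
  | succ k ih =>
    rw [pow_succ, mul_assoc, hskew, ← mul_assoc, ih, Function.iterate_succ_apply, mul_assoc,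
      ← pow_succ]

def IsMonomialGrading (𝒜 : H → AddSubgroup S) (𝒯 : G → AddSubgroup T) (ι : S →+* T) (x : T)
    (φ : H × Multiplicative ℤ →* G) : Prop :=
  ∀ g (u : T), u ∈ 𝒯 g ↔ ∃ f : ℕ →₀ S, u = (f.sum fun i s => ι s * x ^ i) ∧
    ∀ i ∈ f.support, ∃ h : H, f i ∈ 𝒜 h ∧ φ (h, Multiplicative.ofAdd (i : ℤ)) = g

namespace IsMonomialGrading

theorem monomial_mem (h𝒯 : IsMonomialGrading 𝒜 𝒯 ι x φ) {s : S} {h : H} (hs : s ∈ 𝒜 h) (i : ℕ) :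
    ι s * x ^ i ∈ 𝒯 (φ (h, Multiplicative.ofAdd (i : ℤ))) := by
  refine (h𝒯 _ _).2 ⟨Finsupp.single i s, by simp, fun j hj => ⟨h, ?_⟩⟩
  obtain rfl : j = i := by_contra fun hji => (Finsupp.mem_support_iff.1 hj) (by simp [hji])
  simpa using hs

theorem mul_mem_of_skew (h𝒯 : IsMonomialGrading 𝒜 𝒯 ι x φ)
    (hmul : ∀ {g h : H} {a b : S}, a ∈ 𝒜 g → b ∈ 𝒜 h → a * b ∈ 𝒜 (g * h))
    (hτgr : ∀ (h : H) (a : S), a ∈ 𝒜 h → τ a ∈ 𝒜 h) (hskew : ∀ a : S, x * ι a = ι (τ a) * x)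
    {g g' : G} {u v : T} (hu : u ∈ 𝒯 g) (hv : v ∈ 𝒯 g') : u * v ∈ 𝒯 (g * g') := by
  obtain ⟨f, rfl, hf⟩ := (h𝒯 _ _).1 hu
  obtain ⟨f', rfl, hf'⟩ := (h𝒯 _ _).1 hv
  rw [Finsupp.sum, Finsupp.sum, Finset.sum_mul_sum]
  refine sum_mem fun i hi => sum_mem fun j hj => ?_
  obtain ⟨h, hfi, rfl⟩ := hf i hi
  obtain ⟨h', hfj, rfl⟩ := hf' j hj
  have hmono : ι (f i) * x ^ i * (ι (f' j) * x ^ j) = ι (f i * τ^[i] (f' j)) * x ^ (i + j) := by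
    rw [mul_assoc, ← mul_assoc (x ^ i), pow_mul_eq_iterate_mul_pow hskew, map_mul, pow_add]
    simp only [mul_assoc]
  rw [hmono, ← map_mul, Prod.mk_mul_mk, ← ofAdd_add]
  exact_mod_cast h𝒯.monomial_mem (hmul hfi (Function.Iterate.rec (· ∈ 𝒜 h') hfj (hτgr h') i)) _

theorem pow_mem_of_one_mem (h𝒯 : IsMonomialGrading 𝒜 𝒯 ι x φ)
    (hfree : ∀ t : T, ∃! f : ℕ →₀ S, t = f.sum fun i s => ι s * x ^ i)
    (hone : (1 : T) ∈ 𝒯 1) (i : ℕ) : x ^ i ∈ 𝒯 (φ (1, Multiplicative.ofAdd (i : ℤ))) := by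
  obtain ⟨f, hf, hsupp⟩ := (h𝒯 1 1).1 hone
  obtain rfl : f = Finsupp.single 0 1 := (hfree 1).unique hf (by simp)
  by_cases h10 : (1 : S) = 0
  · have : (1 : T) = 0 := by simpa using congrArg ι h10
    rw [← mul_one (x ^ i), this, mul_zero]
    exact zero_mem _
  obtain ⟨h, h1, hh⟩ := hsupp 0 (by simpa using h10)
  have hdeg : φ (h, Multiplicative.ofAdd (i : ℤ)) = φ (1, Multiplicative.ofAdd (i : ℤ)) :=
    calc φ (h, Multiplicative.ofAdd (i : ℤ))
        = φ ((h, 1) * (1, Multiplicative.ofAdd (i : ℤ))) := by simp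
      _ = φ (1, Multiplicative.ofAdd (i : ℤ)) := by
        rw [map_mul, show φ (h, 1) = 1 by simpa using hh, one_mul]
  simpa [hdeg] using h𝒯.monomial_mem h1 i

end IsMonomialGrading

end SkewPolynomial

theorem stmt_14_general {H : Type} [Group H] (n : ℕ)
    (c : H)
    [(Subgroup.zpowers ((c, Multiplicative.ofAdd (-(n + 1 : ℤ))) : H × Multiplicative ℤ)).Normal]
    {S : Type} [Ring S] (𝒜 : H → AddSubgroup S)
    (hmul : ∀ {g h : H} {a b : S}, a ∈ 𝒜 g → b ∈ 𝒜 h → a * b ∈ 𝒜 (g * h))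
    (ω : S) (hω : ω ∈ 𝒜 c)
    (τ : S ≃+* S) (hτgr : ∀ (h : H) (a : S), a ∈ 𝒜 h → τ a ∈ 𝒜 h)
    -- `T` is the skew polynomial ring `S[x; τ]`:
    {T : Type} [Ring T] (ι : S →+* T) (x : T)
    (hskew : ∀ a : S, x * ι a = ι (τ a) * x)
    (hfree : ∀ t : T, ∃! f : ℕ →₀ S, t = f.sum fun i s => ι s * x ^ i)
    -- the `H₁`-grading of `T`, where `H₁ = (H × ℤ)/⟨(c, −(n+1))⟩`:
    (𝒯 : ((H × Multiplicative ℤ) ⧸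
        Subgroup.zpowers ((c, Multiplicative.ofAdd (-(n + 1 : ℤ))) : H × Multiplicative ℤ)) →
      AddSubgroup T)
    [DirectSum.Decomposition 𝒯]
    (h𝒯 : ∀ g (u : T), u ∈ 𝒯 g ↔ ∃ f : ℕ →₀ S,
      u = (f.sum fun i s => ι s * x ^ i) ∧
      ∀ i ∈ f.support, ∃ h : H, f i ∈ 𝒜 h ∧
        (QuotientGroup.mk (h, Multiplicative.ofAdd (i : ℤ)) : (H × Multiplicative ℤ) ⧸
          Subgroup.zpowers ((c, Multiplicative.ofAdd (-(n + 1 : ℤ))) : H × Multiplicative ℤ)) = g) :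
    (x ^ (n + 1) + ι ω) ∈
      𝒯 (QuotientGroup.mk (c, Multiplicative.ofAdd (0 : ℤ))) ∧
    (AddSubgroup.closure {t : T | ∃ a b : T, t = a * (x ^ (n + 1) + ι ω) * b} =
      AddSubgroup.closure {t : T |
        t ∈ AddSubgroup.closure {t : T | ∃ a b : T, t = a * (x ^ (n + 1) + ι ω) * b} ∧
        ∃ g, t ∈ 𝒯 g}) := by
  have hgrading : IsMonomialGrading 𝒜 𝒯 ι x (QuotientGroup.mk' _) := h𝒯
  have hmul𝒯 {g g'} {u v : T} (hu : u ∈ 𝒯 g) (hv : v ∈ 𝒯 g') : u * v ∈ 𝒯 (g * g') :=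
    hgrading.mul_mem_of_skew hmul hτgr hskew hu hv
  have hx : x ^ (n + 1) ∈ 𝒯 (QuotientGroup.mk (c, Multiplicative.ofAdd (0 : ℤ))) := by
    convert hgrading.pow_mem_of_one_mem hfree (one_mem_of_mul_mem 𝒯 hmul𝒯) (n + 1) using 2
    rw [QuotientGroup.mk'_apply, QuotientGroup.eq]
    convert inv_mem (Subgroup.mem_zpowers _) using 1
    ext <;> simp [add_comm]
  have hω' : ι ω ∈ 𝒯 (QuotientGroup.mk (c, Multiplicative.ofAdd (0 : ℤ))) := by
    simpa using hgrading.monomial_mem hω 0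
  have ht := add_mem hx hω'
  exact ⟨ht, closure_mul_mul_eq_closure_homogeneous 𝒯 hmul𝒯 ht⟩

/-- let `S` be an `H`-graded ring, `τ` a graded automorphism of `S`,
`ω ∈ S` a regular normal homogeneous element of degree `c` (central in `H`) with
`τ ω = ω`, and let `T = S[x; τ]` be the skew polynomial ring (`x·a = τ(a)·x`),
graded by the group `H₁ = (H × ℤ)/⟨(c, −(n+1))⟩` with `deg x = x̄` and `S` in its
original degrees.  Then `x^(n+1) + ω` is homogeneous of degree (the image of) `c`,
and hence the two-sided ideal it generates is homogeneous, so that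
`R₁ = S[x;τ]/(x^(n+1) + ω)` inherits an `H₁`-grading. -/
theorem stmt_14 {H : Type} [Group H] (n : ℕ) (hn : 1 ≤ n)
    (c : H) (hc : c ∈ Subgroup.center H)
    [(Subgroup.zpowers ((c, Multiplicative.ofAdd (-(n + 1 : ℤ))) : H × Multiplicative ℤ)).Normal]
    {S : Type} [Ring S] (𝒜 : H → AddSubgroup S)
    (hmul : ∀ {g h : H} {a b : S}, a ∈ 𝒜 g → b ∈ 𝒜 h → a * b ∈ 𝒜 (g * h))
    (ω : S) (hω : ω ∈ 𝒜 c)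
    (hreg_left : ∀ a : S, a * ω = 0 → a = 0)
    (hreg_right : ∀ a : S, ω * a = 0 → a = 0)
    (hnormal_lr : ∀ a : S, ∃ b : S, a * ω = ω * b)
    (hnormal_rl : ∀ b : S, ∃ a : S, ω * b = a * ω)
    (τ : S ≃+* S) (hτgr : ∀ (h : H) (a : S), a ∈ 𝒜 h → τ a ∈ 𝒜 h)
    (hτω : τ ω = ω)
    -- `T` is the skew polynomial ring `S[x; τ]`:
    {T : Type} [Ring T] (ι : S →+* T) (x : T)
    (hskew : ∀ a : S, x * ι a = ι (τ a) * x)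
    (hfree : ∀ t : T, ∃! f : ℕ →₀ S, t = f.sum fun i s => ι s * x ^ i)
    -- the `H₁`-grading of `T`, where `H₁ = (H × ℤ)/⟨(c, −(n+1))⟩`:
    (𝒯 : ((H × Multiplicative ℤ) ⧸
        Subgroup.zpowers ((c, Multiplicative.ofAdd (-(n + 1 : ℤ))) : H × Multiplicative ℤ)) →
      AddSubgroup T)
    [DirectSum.Decomposition 𝒯]
    (h𝒯 : ∀ g (u : T), u ∈ 𝒯 g ↔ ∃ f : ℕ →₀ S,
      u = (f.sum fun i s => ι s * x ^ i) ∧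
      ∀ i ∈ f.support, ∃ h : H, f i ∈ 𝒜 h ∧
        (QuotientGroup.mk (h, Multiplicative.ofAdd (i : ℤ)) : (H × Multiplicative ℤ) ⧸
          Subgroup.zpowers ((c, Multiplicative.ofAdd (-(n + 1 : ℤ))) : H × Multiplicative ℤ)) = g) :
    (x ^ (n + 1) + ι ω) ∈
      𝒯 (QuotientGroup.mk (c, Multiplicative.ofAdd (0 : ℤ))) ∧
    (AddSubgroup.closure {t : T | ∃ a b : T, t = a * (x ^ (n + 1) + ι ω) * b} =
      AddSubgroup.closure {t : T |
        t ∈ AddSubgroup.closure {t : T | ∃ a b : T, t = a * (x ^ (n + 1) + ι ω) * b} ∧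
        ∃ g, t ∈ 𝒯 g}) :=
  stmt_14_general n c 𝒜 hmul ω hω τ hτgr ι x hskew hfree 𝒯 h𝒯
end

section
/- Let A be a Frobenius exact category and n ≥ 2. A morphism (f^s) : (X^s; ι_X^s) → (Y^s; ι_Y^s) between n-inflations is an inflation in the exact category Inf_n(A) (i.e., each component f^s is an inflation in A and the componentwise cokernels form an n-inflation) if and only if for each 1 ≤ s ≤ n−1 the commutative square formed by ι_X^s, ι_Y^s, f^s, f^{s+1} is strictly inflated, meaning the induced map Coker(ι_X^s) → Coker(ι_Y^s) is an inflation in A. -/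
open CategoryTheory Limits

universe v u

open CategoryTheory Limits

variable {𝒜 : Type u} [Category.{v} 𝒜] [Preadditive 𝒜]

/-- An `(m+1)`-inflation in an exact category: a sequence of `m` composable
inflations `X 0 ↣ X 1 ↣ ⋯ ↣ X m`. -/
structure InfObj (E : ExactStructure 𝒜) (m : ℕ) where
  X : Fin (m + 1) → 𝒜
  ι : ∀ s : Fin m, X s.castSucc ⟶ X s.succ
  infl : ∀ s : Fin m, E.Inflation (ι s)

/-- Morphisms of `(m+1)`-inflations: componentwise morphisms commuting with the
structure maps. -/
def InfMor {E : ExactStructure 𝒜} {m : ℕ} (A B : InfObj E m) :=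
  {f : ∀ s : Fin (m + 1), A.X s ⟶ B.X s //
    ∀ s : Fin m, A.ι s ≫ f s.succ = f s.castSucc ≫ B.ι s}

/-- Conflations in the category of `(m+1)`-inflations are defined componentwise. -/
def InfConflation {E : ExactStructure 𝒜} {m : ℕ} {A B C : InfObj E m}
    (f : InfMor A B) (g : InfMor B C) : Prop :=
  ∀ s : Fin (m + 1), E.conflation (f.1 s) (g.1 s)

/-- Inflations in the category of `(m+1)`-inflations. -/
def InfInflation {E : ExactStructure 𝒜} {m : ℕ} {A B : InfObj E m}
    (f : InfMor A B) : Prop :=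
  ∃ (C : InfObj E m) (g : InfMor B C), InfConflation f g

section AuxLemmas

variable (E : ExactStructure 𝒜)

/-- Deflations are epimorphisms (cancellation form). -/
lemma conf_epi {X Y Z W : 𝒜} {i : X ⟶ Y} {p : Y ⟶ Z} (h : E.conflation i p)
    {w w' : Z ⟶ W} (hw : p ≫ w = p ≫ w') : w = w' := by
  have h0 : i ≫ (p ≫ w) = 0 := by rw [← Category.assoc, E.comp_zero h, zero_comp]
  obtain ⟨g, hg, hgu⟩ := E.isCokernel h (p ≫ w) h0
  exact (hgu w rfl).trans (hgu w' hw.symm).symm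

/-- Inflations are monomorphisms (cancellation form). -/
lemma conf_mono {X Y Z W : 𝒜} {i : X ⟶ Y} {p : Y ⟶ Z} (h : E.conflation i p)
    {w w' : W ⟶ X} (hw : w ≫ i = w' ≫ i) : w = w' := by
  have h0 : (w ≫ i) ≫ p = 0 := by rw [Category.assoc, E.comp_zero h, comp_zero]
  obtain ⟨g, hg, hgu⟩ := E.isKernel h (w ≫ i) h0
  exact (hgu w rfl).trans (hgu w' hw.symm).symm

/-- A conflation may be replaced by any other cokernel of its inflation. -/
lemma conf_coker_unique {X Y Z Z' : 𝒜} {i : X ⟶ Y} {p : Y ⟶ Z}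
    (h : E.conflation i p) (c : Y ⟶ Z') (hc0 : i ≫ c = 0)
    (huniv : ∀ {T : 𝒜} (φ : Y ⟶ T), i ≫ φ = 0 → ∃! g : Z' ⟶ T, c ≫ g = φ) :
    E.conflation i c := by
  obtain ⟨e₁, he₁, -⟩ := E.isCokernel h c hc0
  obtain ⟨e₂, he₂, -⟩ := huniv p (E.comp_zero h)
  have h12 : e₁ ≫ e₂ = 𝟙 Z := by
    apply conf_epi E h
    rw [← Category.assoc, he₁, he₂, Category.comp_id]
  have h21 : e₂ ≫ e₁ = 𝟙 Z' := by
    obtain ⟨g, -, hgu⟩ := huniv c hc0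
    have h1 := hgu (e₂ ≫ e₁) (by show c ≫ (e₂ ≫ e₁) = c; rw [← Category.assoc, he₂, he₁])
    have h2 := hgu (𝟙 Z') (Category.comp_id c)
    rw [h1, h2]
  have hres := E.iso_closed (Iso.refl X) (Iso.refl Y) (Iso.mk e₁ e₂ h12 h21) h
  simpa [he₁] using hres

/-- A conflation may be replaced by any other kernel of its deflation. -/
lemma conf_ker_unique {X Y Z X' : 𝒜} {i : X ⟶ Y} {p : Y ⟶ Z}
    (h : E.conflation i p) (k : X' ⟶ Y) (hk0 : k ≫ p = 0)
    (huniv : ∀ {T : 𝒜} (φ : T ⟶ Y), φ ≫ p = 0 → ∃! g : T ⟶ X', g ≫ k = φ) :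
    E.conflation k p := by
  obtain ⟨e₁, he₁, -⟩ := E.isKernel h k hk0
  obtain ⟨e₂, he₂, -⟩ := huniv i (E.comp_zero h)
  have h21 : e₂ ≫ e₁ = 𝟙 X := by
    apply conf_mono E h
    rw [Category.assoc, he₁, he₂, Category.id_comp]
  have h12 : e₁ ≫ e₂ = 𝟙 X' := by
    obtain ⟨g, -, hgu⟩ := huniv k hk0
    have h1 := hgu (e₁ ≫ e₂) (by show (e₁ ≫ e₂) ≫ k = k; rw [Category.assoc, he₂, he₁])
    have h2 := hgu (𝟙 X') (Category.id_comp k)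
    rw [h1, h2]
  have hres := E.iso_closed (Iso.mk e₁ e₂ h12 h21) (Iso.refl Y) (Iso.refl Z) h
  simpa [he₁] using hres

/-- Composing an inflation with an isomorphism gives an inflation. -/
lemma infl_comp_iso {X Y Y' : 𝒜} {i : X ⟶ Y} (hi : E.Inflation i)
    {φ : Y ⟶ Y'} {ψ : Y' ⟶ Y} (h1 : φ ≫ ψ = 𝟙 Y) (h2 : ψ ≫ φ = 𝟙 Y') :
    E.Inflation (i ≫ φ) := by
  obtain ⟨Z, p, hp⟩ := hi
  refine ⟨Z, ψ ≫ p, ?_⟩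
  have hres := E.iso_closed (Iso.refl X) (Iso.mk φ ψ h1 h2) (Iso.refl Z) hp
  simpa using hres

/-- In a pushout square along an inflation, the opposite side is an inflation with
the same cokernel. -/
lemma pushout_conflation {X Y T P Z : 𝒜} {i : X ⟶ Y} {f : X ⟶ T} {a : Y ⟶ P} {b : T ⟶ P}
    (hpo : IsPushout i f a b) {p : Y ⟶ Z} (hip : E.conflation i p) (hb : E.Inflation b) :
    ∃ c : P ⟶ Z, E.conflation b c ∧ a ≫ c = p ∧ b ≫ c = 0 := by
  have hw : i ≫ p = f ≫ (0 : T ⟶ Z) := by rw [E.comp_zero hip, comp_zero]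
  set c := hpo.desc p 0 hw with hcdef
  have hac : a ≫ c = p := hpo.inl_desc _ _ _
  have hbc : b ≫ c = 0 := hpo.inr_desc _ _ _
  obtain ⟨Z₀, c₀, hc₀⟩ := hb
  refine ⟨c, ?_, hac, hbc⟩
  apply conf_coker_unique E hc₀ c hbc
  intro W φ hφ
  have h0 : i ≫ (a ≫ φ) = 0 := by
    rw [← Category.assoc, hpo.w, Category.assoc, hφ, comp_zero]
  obtain ⟨s, hs, -⟩ := E.isCokernel hip (a ≫ φ) h0
  refine ⟨s, ?_, ?_⟩
  · apply hpo.hom_ext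
    · rw [← Category.assoc, hac, hs]
    · rw [← Category.assoc, hbc, zero_comp, hφ]
  · intro g' hg'
    apply conf_epi E hip
    rw [hs, ← hac, Category.assoc, hg']

/-- Both structure maps out of a pushout of two inflations are inflations. -/
lemma pushout_inl_infl {X Y T P : 𝒜} {i : X ⟶ Y} {f : X ⟶ T} {a : Y ⟶ P} {b : T ⟶ P}
    (hpo : IsPushout i f a b) (hi : E.Inflation i) (hf : E.Inflation f) :
    E.Inflation a := by
  obtain ⟨P₂, a₂, b₂, hpo₂, hb₂infl⟩ := E.pushout_infl f i hf
  set φ := hpo₂.desc b a hpo.w.symm with hφdef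
  have hφ1 : a₂ ≫ φ = b := hpo₂.inl_desc _ _ _
  have hφ2 : b₂ ≫ φ = a := hpo₂.inr_desc _ _ _
  set ψ := hpo.flip.desc a₂ b₂ hpo₂.w with hψdef
  have hψ1 : b ≫ ψ = a₂ := hpo.flip.inl_desc _ _ _
  have hψ2 : a ≫ ψ = b₂ := hpo.flip.inr_desc _ _ _
  have hφψ : φ ≫ ψ = 𝟙 P₂ := by
    apply hpo₂.hom_ext
    · rw [← Category.assoc, hφ1, hψ1, Category.comp_id]
    · rw [← Category.assoc, hφ2, hψ2, Category.comp_id]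
  have hψφ : ψ ≫ φ = 𝟙 P := by
    apply hpo.hom_ext
    · rw [← Category.assoc, hψ2, hφ2, Category.comp_id]
    · rw [← Category.assoc, hψ1, hφ1, Category.comp_id]
  have h := infl_comp_iso E hb₂infl hφψ hψφ
  rwa [hφ2] at h

/-- The short five lemma, in the special case where the maps on the outer terms
are identities: the middle map is then an isomorphism. -/
lemma short_five {K M N C : 𝒜} {i : K ⟶ M} {q : M ⟶ C} {j : K ⟶ N} {γ : N ⟶ C}
    (hiq : E.conflation i q) (hjγ : E.conflation j γ) (β : M ⟶ N)
    (h1 : i ≫ β = j) (h2 : β ≫ γ = q) :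
    ∃ δ : N ⟶ M, β ≫ δ = 𝟙 M ∧ δ ≫ β = 𝟙 N := by
  obtain ⟨P, a, b, hpo, hbinfl⟩ := E.pushout_infl i j ⟨C, q, hiq⟩
  have hainfl : E.Inflation a := pushout_inl_infl E hpo ⟨C, q, hiq⟩ ⟨C, γ, hjγ⟩
  obtain ⟨π, hbπ, haπ, hbπ0⟩ := pushout_conflation E hpo hiq hbinfl
  obtain ⟨π', haπ', hbπ', haπ'0⟩ := pushout_conflation E hpo.flip hjγ hainfl
  set τ := hpo.desc β (𝟙 N) (by rw [h1, Category.comp_id]) with hτdef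
  have hτ1 : a ≫ τ = β := hpo.inl_desc _ _ _
  have hτ2 : b ≫ τ = 𝟙 N := hpo.inr_desc _ _ _
  have hbe : b ≫ (𝟙 P - τ ≫ b) = 0 := by
    rw [Preadditive.comp_sub, Category.comp_id, ← Category.assoc, hτ2,
      Category.id_comp, sub_self]
  obtain ⟨ν, hν, -⟩ := E.isCokernel hbπ (𝟙 P - τ ≫ b) hbe
  have hone : τ ≫ b + π ≫ ν = 𝟙 P := by rw [hν]; abel
  have hντ : ν ≫ τ = 0 := by
    apply conf_epi E hbπ
    rw [← Category.assoc, hν, Preadditive.sub_comp, Category.id_comp,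
      Category.assoc, hτ2, Category.comp_id, sub_self, comp_zero]
  have hνπ' : ν ≫ π' = -𝟙 C := by
    have e3 : a ≫ π' = β ≫ γ + q ≫ ν ≫ π' := by
      conv_lhs => rw [← Category.id_comp π', ← hone]
      simp only [Preadditive.add_comp, Preadditive.comp_add, Category.assoc]
      rw [← Category.assoc a τ, hτ1, hbπ', ← Category.assoc a π, haπ]
    rw [haπ'0, h2] at e3
    apply conf_epi E hiq
    rw [Preadditive.comp_neg, Category.comp_id]
    exact eq_neg_of_add_eq_zero_right e3.symm
  have hχ : (b + γ ≫ ν) ≫ π' = 0 := by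
    rw [Preadditive.add_comp, hbπ', Category.assoc, hνπ']
    simp
  obtain ⟨δ, hδ, -⟩ := E.isKernel haπ' (b + γ ≫ ν) hχ
  refine ⟨δ, ?_, ?_⟩
  · apply conf_mono E haπ'
    have lhs : (β ≫ δ) ≫ a = β ≫ b + q ≫ ν := by
      rw [Category.assoc, hδ, Preadditive.comp_add, ← Category.assoc, h2]
    have rhs : 𝟙 M ≫ a = β ≫ b + q ≫ ν := by
      rw [Category.id_comp]
      conv_lhs => rw [← Category.comp_id a, ← hone]
      rw [Preadditive.comp_add, ← Category.assoc, ← Category.assoc, hτ1, haπ]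
    rw [lhs, rhs]
  · calc δ ≫ β = δ ≫ a ≫ τ := by rw [hτ1]
    _ = (b + γ ≫ ν) ≫ τ := by rw [← Category.assoc, hδ]
    _ = 𝟙 N := by
        rw [Preadditive.add_comp, hτ2, Category.assoc, hντ, comp_zero, add_zero]

/-- Noether lemma: in a morphism of conflations which is the identity on the
kernels and an inflation in the middle, the induced map of cokernels is an
inflation. -/
lemma noether_infl {K M M' C C' : 𝒜} {i : K ⟶ M} {q : M ⟶ C} {i' : K ⟶ M'}
    {q' : M' ⟶ C'} (hiq : E.conflation i q) (hi'q' : E.conflation i' q')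
    {t : M ⟶ M'} (ht : E.Inflation t) (hc1 : i ≫ t = i') {u : C ⟶ C'}
    (hc2 : t ≫ q' = q ≫ u) : E.Inflation u := by
  obtain ⟨P, a, b, hpo, hbinfl⟩ := E.pushout_infl t q ht
  set z := hpo.desc q' u hc2 with hzdef
  have hz1 : a ≫ z = q' := hpo.inl_desc _ _ _
  have hz2 : b ≫ z = u := hpo.inr_desc _ _ _
  have hia : i' ≫ a = 0 := by
    rw [← hc1, Category.assoc, hpo.w, ← Category.assoc, E.comp_zero hiq, zero_comp]
  obtain ⟨w, hw, -⟩ := E.isCokernel hi'q' a hia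
  have hzw : z ≫ w = 𝟙 P := by
    apply hpo.hom_ext
    · rw [← Category.assoc, hz1, hw, Category.comp_id]
    · have huw : u ≫ w = b := by
        apply conf_epi E hiq
        calc q ≫ u ≫ w = (t ≫ q') ≫ w := by rw [hc2, Category.assoc]
        _ = t ≫ a := by rw [Category.assoc, hw]
        _ = q ≫ b := hpo.w
      rw [← Category.assoc, hz2, huw, Category.comp_id]
  have hwz : w ≫ z = 𝟙 C' := by
    apply conf_epi E hi'q'
    rw [← Category.assoc, hw, hz1, Category.comp_id]
  have h := infl_comp_iso E hbinfl hzw hwz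
  rwa [hz2] at h

/-- Dual Noether lemma: in a morphism of conflations which is the identity on
the kernels with an inflation between the cokernels, the middle map is an
inflation. -/
lemma noether_infl' {K M M' C C' : 𝒜} {i : K ⟶ M} {q : M ⟶ C} {i' : K ⟶ M'}
    {q' : M' ⟶ C'} (hiq : E.conflation i q) (hi'q' : E.conflation i' q')
    {t : M ⟶ M'} (hc1 : i ≫ t = i') {u : C ⟶ C'} (hc2 : t ≫ q' = q ≫ u)
    (hu : E.Inflation u) : E.Inflation t := by
  obtain ⟨D, ρ, huρ⟩ := hu
  obtain ⟨N, k, hk⟩ := E.defl_comp q' ρ ⟨K, i', hi'q'⟩ ⟨C, u, huρ⟩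
  have hkq' : (k ≫ q') ≫ ρ = 0 := by rw [Category.assoc]; exact E.comp_zero hk
  obtain ⟨γ, hγ, -⟩ := E.isKernel huρ (k ≫ q') hkq'
  obtain ⟨W, aw, bw, hpb, K₀, k₀, hk₀⟩ := E.pullback_defl q' u ⟨K, i', hi'q'⟩
  have hawker : aw ≫ q' ≫ ρ = 0 := by
    rw [← Category.assoc, hpb.w, Category.assoc, E.comp_zero huρ, comp_zero]
  obtain ⟨θ, hθ, -⟩ := E.isKernel hk aw hawker
  have hθγ : θ ≫ γ = bw := by
    apply conf_mono E huρ
    rw [Category.assoc, hγ, ← Category.assoc, hθ, hpb.w]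
  set η := hpb.lift k γ hγ.symm with hηdef
  have hη1 : η ≫ aw = k := hpb.lift_fst _ _ _
  have hη2 : η ≫ bw = γ := hpb.lift_snd _ _ _
  have hθη : θ ≫ η = 𝟙 W := by
    apply hpb.hom_ext
    · rw [Category.assoc, hη1, hθ, Category.id_comp]
    · rw [Category.assoc, hη2, hθγ, Category.id_comp]
  have hηθ : η ≫ θ = 𝟙 N := by
    apply conf_mono E hk
    rw [Category.assoc, hθ, hη1, Category.id_comp]
  have hconfγ : E.conflation (k₀ ≫ θ) γ := by
    have h' := E.iso_closed (Iso.refl K₀) (Iso.mk θ η hθη hηθ) (Iso.refl C) hk₀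
    simpa [hη2] using h'
  have hi'ker : i' ≫ q' ≫ ρ = 0 := by
    rw [← Category.assoc, E.comp_zero hi'q', zero_comp]
  obtain ⟨j, hj, -⟩ := E.isKernel hk i' hi'ker
  have hjγ : E.conflation j γ := by
    apply conf_ker_unique E hconfγ j
    · apply conf_mono E huρ
      rw [Category.assoc, hγ, ← Category.assoc, hj, E.comp_zero hi'q', zero_comp]
    · intro T φ hφ
      have hφk : (φ ≫ k) ≫ q' = 0 := by
        rw [Category.assoc, ← hγ, ← Category.assoc, hφ, zero_comp]
      obtain ⟨ψ, hψ, -⟩ := E.isKernel hi'q' (φ ≫ k) hφk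
      refine ⟨ψ, ?_, ?_⟩
      · apply conf_mono E hk
        rw [Category.assoc, hj, hψ]
      · intro y hy
        apply conf_mono E hi'q'
        calc y ≫ i' = (y ≫ j) ≫ k := by rw [Category.assoc, hj]
        _ = φ ≫ k := by rw [hy]
        _ = ψ ≫ i' := hψ.symm
  have htker : t ≫ q' ≫ ρ = 0 := by
    rw [← Category.assoc, hc2, Category.assoc, E.comp_zero huρ, comp_zero]
  obtain ⟨β, hβ, -⟩ := E.isKernel hk t htker
  have hβγ : β ≫ γ = q := by
    apply conf_mono E huρ
    rw [Category.assoc, hγ, ← Category.assoc, hβ, hc2]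
  have hiβ : i ≫ β = j := by
    apply conf_mono E hk
    rw [Category.assoc, hβ, hc1, ← hj]
  obtain ⟨δ, hβδ, hδβ⟩ := short_five E hiq hjγ β hiβ hβγ
  refine ⟨D, q' ≫ ρ, ?_⟩
  have hfin := E.iso_closed (Iso.mk β δ hβδ hδβ) (Iso.refl M') (Iso.refl D) hk
  have hfin' : E.conflation (β ≫ k) (q' ≫ ρ) := by simpa using hfin
  rwa [hβ] at hfin'

/-- Core lemma: in a commutative square of four inflations, if the induced map
between the cokernels of one pair of parallel inflations is an inflation, then
so is the induced map between the cokernels of the other pair. -/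
lemma strictly_inflated_core {A B C D Cx Cy Cf Cg : 𝒜} {x : A ⟶ B} {f : A ⟶ C}
    {y : C ⟶ D} {g : B ⟶ D} (hsq : x ≫ g = f ≫ y)
    {p : B ⟶ Cx} (hx : E.conflation x p) {qD : D ⟶ Cy} (hy : E.conflation y qD)
    {r : C ⟶ Cf} (hf : E.conflation f r) {s : D ⟶ Cg} (hg : E.conflation g s)
    {u : Cx ⟶ Cy} (hu1 : p ≫ u = g ≫ qD) (huinfl : E.Inflation u)
    {v : Cf ⟶ Cg} (hv1 : r ≫ v = y ≫ s) : E.Inflation v := by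
  obtain ⟨P, a, b, hpo, hbinfl⟩ := E.pushout_infl x f ⟨Cx, p, hx⟩
  have hainfl := pushout_inl_infl E hpo ⟨Cx, p, hx⟩ ⟨Cf, r, hf⟩
  obtain ⟨c, hcb, hac, hbc⟩ := pushout_conflation E hpo hx hbinfl
  obtain ⟨d, had, hbd, had0⟩ := pushout_conflation E hpo.flip hf hainfl
  set h := hpo.desc g y hsq with hhdef
  have hah : a ≫ h = g := hpo.inl_desc _ _ _
  have hbh : b ≫ h = y := hpo.inr_desc _ _ _
  have hcu : h ≫ qD = c ≫ u := by
    apply hpo.hom_ext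
    · rw [← Category.assoc, hah, ← Category.assoc, hac, hu1]
    · rw [← Category.assoc, hbh, E.comp_zero hy, ← Category.assoc, hbc, zero_comp]
  have hhinfl : E.Inflation h := noether_infl' E hcb hy hbh hcu huinfl
  have hds : h ≫ s = d ≫ v := by
    apply hpo.hom_ext
    · rw [← Category.assoc, hah, E.comp_zero hg, ← Category.assoc, had0, zero_comp]
    · rw [← Category.assoc, hbh, ← Category.assoc, hbd, hv1]
  exact noether_infl E had hg hhinfl hah hds

end AuxLemmas

/-- a morphism `(f^s) : (X^s; ι_X^s) → (Y^s; ι_Y^s)` of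
`n`-inflations (`n = m + 1 ≥ 2`) is an inflation in `Inf_n(𝒜)` if and only if
every component `f^s` is an inflation in `𝒜` and each commutative square formed
by `ι_X^s, ι_Y^s, f^s, f^{s+1}` is strictly inflated, i.e. the induced morphism
`Coker(ι_X^s) → Coker(ι_Y^s)` is an inflation in `𝒜`. -/
theorem stmt_19 (E : ExactStructure 𝒜) (hE : E.IsFrobenius) (m : ℕ)
    {A B : InfObj E m} (f : InfMor A B)
    {CX : Fin m → 𝒜} (pX : ∀ s : Fin m, A.X s.succ ⟶ CX s)
    (hX : ∀ s : Fin m, E.conflation (A.ι s) (pX s))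
    {CY : Fin m → 𝒜} (pY : ∀ s : Fin m, B.X s.succ ⟶ CY s)
    (hY : ∀ s : Fin m, E.conflation (B.ι s) (pY s))
    (u : ∀ s : Fin m, CX s ⟶ CY s)
    (hu : ∀ s : Fin m, pX s ≫ u s = f.1 s.succ ≫ pY s) :
    InfInflation f ↔
      ((∀ s : Fin (m + 1), E.Inflation (f.1 s)) ∧
       (∀ s : Fin m, E.Inflation (u s))) := by
  constructor
  · rintro ⟨Cobj, gm, hconf⟩
    refine ⟨fun s => ⟨_, gm.1 s, hconf s⟩, fun s => ?_⟩
    exact strictly_inflated_core E (f.2 s).symm (hconf s.castSucc) (hconf s.succ)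
      (hX s) (hY s) (gm.2 s).symm (Cobj.infl s) (hu s)
  · rintro ⟨h1, h2⟩
    choose Z q hq using h1
    have hzero : ∀ s : Fin m, f.1 s.castSucc ≫ B.ι s ≫ q s.succ = 0 := fun s => by
      rw [← Category.assoc, ← f.2 s, Category.assoc, E.comp_zero (hq s.succ),
        comp_zero]
    have hEx : ∀ s : Fin m,
        ∃! g' : Z s.castSucc ⟶ Z s.succ,
          q s.castSucc ≫ g' = B.ι s ≫ q s.succ := fun s =>
      E.isCokernel (hq s.castSucc) _ (hzero s)
    choose ιZ hι huni using hEx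
    have hinfl : ∀ s : Fin m, E.Inflation (ιZ s) := fun s =>
      strictly_inflated_core E (f.2 s) (hX s) (hY s) (hq s.castSucc) (hq s.succ)
        (hu s) (h2 s) (hι s)
    exact ⟨⟨Z, ιZ, hinfl⟩, ⟨q, fun s => (hι s).symm⟩, fun s => hq s⟩
end
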